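/- arXiv:2102.11322 — 6 statements merged into one kernel-verified Lean document; each statement's English description precedes it below -/
import Mathlib

section
/- If y_p is an even solution of the inhomogeneous Weber equation y'' + (x²/4 - a)y = -1 that vanishes at x = 0, then y_p equals the Nield-Kuznetsov function N_W(a,x) = W(a,x)∫₀ˣ W(a,-t)dt - W(a,-x)∫₀ˣ W(a,t)dt; i.e., the properties of being even and vanishing at 0 determine the particular solution uniquely. -/
open intervalIntegral

/-- Uniqueness: an even solution of `y'' + (x²/4 - a) y = -1` vanishing at `0`
must equal the Nield-Kuznetsov function `N_W(a,x)`. -/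
theorem stmt0 (a : ℝ) (W : ℝ → ℝ)
    (hW : ContDiff ℝ (⊤ : ℕ∞) W)
    (hWode : ∀ x, deriv (deriv W) x + (x ^ 2 / 4 - a) * W x = 0)
    (hW0 : W 0 ≠ 0)
    (hWron : ∀ x, W x * deriv (fun t => W (-t)) x - W (-x) * deriv W x = 1)
    (N : ℝ → ℝ)
    (hN : ∀ x, N x =
      W x * (∫ t in (0 : ℝ)..x, W (-t)) - W (-x) * ∫ t in (0 : ℝ)..x, W t)
    (y : ℝ → ℝ) (hy : ContDiff ℝ (⊤ : ℕ∞) y)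
    (hyode : ∀ x, deriv (deriv y) x + (x ^ 2 / 4 - a) * y x = -1)
    (hyeven : ∀ x, y (-x) = y x)
    (hy0 : y 0 = 0) :
    y = N := by
  -- basic differentiability facts
  have hWi : ContDiff ℝ (⊤ : ℕ∞) W := hW.of_le (mod_cast le_top)
  have hyi : ContDiff ℝ (⊤ : ℕ∞) y := hy.of_le (mod_cast le_top)
  have hWd : Differentiable ℝ W := hW.differentiable (by simp)
  have hW' : ContDiff ℝ (⊤ : ℕ∞) (deriv W) := (contDiff_infty_iff_deriv.mp hWi).2
  have hW'd : Differentiable ℝ (deriv W) := hW'.differentiable (by simp)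
  have hyd : Differentiable ℝ y := hy.differentiable (by simp)
  have hy' : ContDiff ℝ (⊤ : ℕ∞) (deriv y) := (contDiff_infty_iff_deriv.mp hyi).2
  have hy'd : Differentiable ℝ (deriv y) := hy'.differentiable (by simp)
  -- derivative of x ↦ W (-x)
  have hvD : ∀ x : ℝ, HasDerivAt (fun s => W (-s)) (-(deriv W (-x))) x := by
    intro x
    have h1 : HasDerivAt (fun t : ℝ => -t) (-1) x := (hasDerivAt_id x).neg
    have h2 := ((hWd (-x)).hasDerivAt).comp x h1
    exact h2.congr_deriv (by ring)
  have hdv : ∀ x : ℝ, deriv (fun s => W (-s)) x = -(deriv W (-x)) :=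
    fun x => (hvD x).deriv
  -- derivative of x ↦ -(deriv W (-x))
  have hv'D : ∀ x : ℝ, HasDerivAt (fun s => -(deriv W (-s))) (deriv (deriv W) (-x)) x := by
    intro x
    have h1 : HasDerivAt (fun t : ℝ => -t) (-1) x := (hasDerivAt_id x).neg
    have h2 := ((hW'd (-x)).hasDerivAt).comp x h1
    exact h2.neg.congr_deriv (by ring)
  -- ODE for W at -x
  have hWodeNeg : ∀ x : ℝ, deriv (deriv W) (-x) = -((x ^ 2 / 4 - a) * W (-x)) := by
    intro x
    have h := hWode (-x)
    rw [neg_pow, pow_succ, pow_succ] at h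
    nlinarith [h]
  have hWode' : ∀ x : ℝ, deriv (deriv W) x = -((x ^ 2 / 4 - a) * W x) := by
    intro x; linarith [hWode x]
  -- Wronskian in explicit form
  have hWron' : ∀ x : ℝ, W x * (-(deriv W (-x))) - W (-x) * deriv W x = 1 := by
    intro x
    have h := hWron x
    rwa [hdv x] at h
  -- FTC derivatives
  have hvcont : Continuous (fun t : ℝ => W (-t)) := hW.continuous.comp continuous_neg
  have hFD : ∀ x : ℝ, HasDerivAt (fun s : ℝ => ∫ t in (0:ℝ)..s, W (-t)) (W (-x)) x :=
    fun x => (hvcont.integral_hasStrictDerivAt 0 x).hasDerivAt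
  have hGD : ∀ x : ℝ, HasDerivAt (fun s : ℝ => ∫ t in (0:ℝ)..s, W t) (W x) x :=
    fun x => (hW.continuous.integral_hasStrictDerivAt 0 x).hasDerivAt
  have hNfun : N = fun x => W x * (∫ t in (0:ℝ)..x, W (-t)) - W (-x) * ∫ t in (0:ℝ)..x, W t :=
    funext hN
  -- first derivative of N
  have hND : ∀ x : ℝ, HasDerivAt N
      (deriv W x * (∫ t in (0:ℝ)..x, W (-t)) + deriv W (-x) * (∫ t in (0:ℝ)..x, W t)) x := by
    intro x
    rw [hNfun]
    have h1 := ((hWd x).hasDerivAt.mul (hFD x)).sub ((hvD x).mul (hGD x))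
    refine h1.congr_deriv ?_; symm
    ring
  have hdN : ∀ x : ℝ, deriv N x
      = deriv W x * (∫ t in (0:ℝ)..x, W (-t)) + deriv W (-x) * (∫ t in (0:ℝ)..x, W t) :=
    fun x => (hND x).deriv
  have hdNfun : deriv N = fun x =>
      deriv W x * (∫ t in (0:ℝ)..x, W (-t)) + deriv W (-x) * (∫ t in (0:ℝ)..x, W t) :=
    funext hdN
  -- second derivative of N : N'' = -(x²/4 - a) N - 1
  have hN'D : ∀ x : ℝ, HasDerivAt (deriv N) (-((x ^ 2 / 4 - a) * N x) - 1) x := by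
    intro x
    rw [hdNfun]
    have h2 : HasDerivAt (fun s => deriv W (-s)) (-(deriv (deriv W) (-x))) x := by
      simpa only [Pi.neg_def, neg_neg] using (hv'D x).neg
    have h1 := ((hW'd x).hasDerivAt.mul (hFD x)).add (h2.mul (hGD x))
    refine h1.congr_deriv ?_; symm
    rw [hN x, hWode' x, hWodeNeg x]
    linear_combination hWron' x
  -- derivative of N at 0 is 0
  have hdN0 : deriv N 0 = 0 := by
    have := hdN 0
    simpa [intervalIntegral.integral_same] using this
  have hN0 : N 0 = 0 := by
    have := hN 0
    simpa [intervalIntegral.integral_same] using this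
  -- y is even, so deriv y 0 = 0
  have hdy0 : deriv y 0 = 0 := by
    have hodd : ∀ x : ℝ, deriv y x = -(deriv y (-x)) := by
      intro x
      have h1 : HasDerivAt (fun t : ℝ => -t) (-1) x := (hasDerivAt_id x).neg
      have h2 := ((hyd (-x)).hasDerivAt).comp x h1
      have h3 : (fun s => y (-s)) = y := funext hyeven
      have h4' : HasDerivAt (fun s => y (-s)) (-(deriv y (-x))) x := by exact h2.congr_deriv (by ring)
      have h4 : HasDerivAt y (-(deriv y (-x))) x :=
        h4'.congr_of_eventuallyEq (Filter.Eventually.of_forall fun s => (hyeven s).symm)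
      exact h4.deriv
    have := hodd 0
    simp at this
    linarith [this]
  -- second derivative of y
  have hy'D : ∀ x : ℝ, HasDerivAt (deriv y) (deriv (deriv y) x) x :=
    fun x => (hy'd x).hasDerivAt
  -- g = y - N pieces
  have hgD : ∀ x : ℝ, HasDerivAt (fun s => y s - N s) (deriv y x - deriv N x) x :=
    fun x => (hyd x).hasDerivAt.sub (hND x).differentiableAt.hasDerivAt
  have hg'D : ∀ x : ℝ, HasDerivAt (fun s => deriv y s - deriv N s)
      (-((x ^ 2 / 4 - a) * (y x - N x))) x := by
    intro x
    have h1 := (hy'D x).sub (hN'D x)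
    refine h1.congr_deriv ?_; symm
    have := hyode x
    linarith [this]
  -- Wronskian-type constants
  set A : ℝ → ℝ := fun x =>
      (y x - N x) * (-(deriv W (-x))) - (deriv y x - deriv N x) * W (-x) with hA_def
  set B : ℝ → ℝ := fun x =>
      (deriv y x - deriv N x) * W x - (y x - N x) * deriv W x with hB_def
  have hAD : ∀ x : ℝ, HasDerivAt A 0 x := by
    intro x
    have h1 := ((hgD x).mul (hv'D x)).sub ((hg'D x).mul (hvD x))
    refine h1.congr_deriv ?_; symm
    rw [hWodeNeg x]
    ring
  have hBD : ∀ x : ℝ, HasDerivAt B 0 x := by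
    intro x
    have h1 := ((hg'D x).mul (hWd x).hasDerivAt).sub ((hgD x).mul (hW'd x).hasDerivAt)
    refine h1.congr_deriv ?_; symm
    rw [hWode' x]
    ring
  have hAconst : ∀ x : ℝ, A x = A 0 :=
    fun x => is_const_of_deriv_eq_zero (fun t => (hAD t).differentiableAt)
      (fun t => (hAD t).deriv) x 0
  have hBconst : ∀ x : ℝ, B x = B 0 :=
    fun x => is_const_of_deriv_eq_zero (fun t => (hBD t).differentiableAt)
      (fun t => (hBD t).deriv) x 0
  have hA0 : A 0 = 0 := by
    simp [hA_def, hy0, hN0, hdy0, hdN0]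
  have hB0 : B 0 = 0 := by
    simp [hB_def, hy0, hN0, hdy0, hdN0]
  funext x
  have hAx : A x = 0 := by rw [hAconst x, hA0]
  have hBx : B x = 0 := by rw [hBconst x, hB0]
  have key : y x - N x = A x * W x + B x * W (-x) := by
    simp only [hA_def, hB_def]
    linear_combination (-(y x - N x)) * hWron' x
  rw [hAx, hBx] at key
  simp at key
  linarith [key]
end

section
/- As a → ∞, Y(a) = Im{(1-2ia)^{-1}F(1/2,1;5/4-ia/2;1/2)} has the asymptotic expansion Y(a) ~ Σ_{k≥0} y_{2k+1}/a^{2k+1} with y₁ = 1/2, y₃ = 1/4, y₅ = 7/8, y₇ = 139/16; in particular Y(a) = 1/(2a) + O(a^{-3}). -/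
open Filter Asymptotics

/-- The Gauss hypergeometric function `F(a,b;c;z)` defined by its series. -/
noncomputable def hypF (a b c z : ℂ) : ℂ :=
  ∑' n : ℕ, ((ascPochhammer ℂ n).eval a * (ascPochhammer ℂ n).eval b) /
      ((ascPochhammer ℂ n).eval c * (n.factorial : ℂ)) * z ^ n

/-!
Since `(1)ₙ = n!`, the series is `∑ (1/2)ₙ / (c)ₙ · 2⁻ⁿ` with `c = 5/4 - ia/2`, and its terms
decrease at least geometrically because `|1/2 + j| ≤ |c + j|`. As also `|c + j| ≥ a/2`, the tail
after eight terms is `O(a⁻⁸)`, and the prefactor `(1 - 2ia)⁻¹` contributes one more factor `1/a`.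
The first eight terms times the prefactor are a rational function `S/Q` of `a`, and the
expansion is exactly what makes `16a⁷ Im(S Q̄) - |Q|² (8a⁶ + 4a⁴ + 14a² + 139)` a polynomial of
degree `14`, while `|Q|²` grows like `a¹⁶`.
-/

open Complex Polynomial

lemma ascPochhammer_eval_add {R : Type*} [CommSemiring R] (c : R) (n m : ℕ) :
    (ascPochhammer R (n + m)).eval c =
      (ascPochhammer R n).eval c * (ascPochhammer R m).eval (c + n) := by
  rw [← ascPochhammer_mul, eval_mul, eval_comp, eval_add, eval_X, eval_natCast]

lemma pow_le_norm_ascPochhammer_eval {𝕜 : Type*} [NormedField 𝕜] {c : 𝕜} {m : ℝ} (hm₀ : 0 ≤ m)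
    (hm : ∀ j : ℕ, m ≤ ‖c + j‖) (n : ℕ) : m ^ n ≤ ‖(ascPochhammer 𝕜 n).eval c‖ := by
  induction n with
  | zero => simp
  | succ n ih =>
    rw [ascPochhammer_succ_eval, norm_mul, pow_succ]
    exact mul_le_mul ih (hm n) hm₀ (norm_nonneg _)

section hypTerm

variable {𝕜 : Type*} [NormedField 𝕜] (b c z : 𝕜)

noncomputable def hypTerm (n : ℕ) : 𝕜 :=
  (ascPochhammer 𝕜 n).eval b / (ascPochhammer 𝕜 n).eval c * z ^ n

lemma hypTerm_succ (n : ℕ) : hypTerm b c z (n + 1) = hypTerm b c z n * ((b + n) / (c + n) * z) := by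
  simp only [hypTerm, ascPochhammer_succ_eval, ← div_mul_div_comm, pow_succ]
  ring

variable {b c z}

lemma norm_hypTerm_succ_le {n : ℕ} (h : ‖b + n‖ ≤ ‖c + n‖) :
    ‖hypTerm b c z (n + 1)‖ ≤ ‖hypTerm b c z n‖ * ‖z‖ := by
  rw [hypTerm_succ, norm_mul, norm_mul, norm_div]
  gcongr
  exact mul_le_of_le_one_left (norm_nonneg z) (div_le_one_of_le₀ h (norm_nonneg _))

lemma norm_hypTerm_add_le (h : ∀ j : ℕ, ‖b + j‖ ≤ ‖c + j‖) (N n : ℕ) :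
    ‖hypTerm b c z (n + N)‖ ≤ ‖hypTerm b c z N‖ * ‖z‖ ^ n := by
  induction n with
  | zero => simp
  | succ n ih =>
    calc ‖hypTerm b c z (n + 1 + N)‖ = ‖hypTerm b c z (n + N + 1)‖ := by rw [add_right_comm]
      _ ≤ ‖hypTerm b c z (n + N)‖ * ‖z‖ := norm_hypTerm_succ_le (h _)
      _ ≤ ‖hypTerm b c z N‖ * ‖z‖ ^ (n + 1) := by rw [pow_succ, ← mul_assoc]; gcongr

lemma norm_hypTerm_le {m : ℝ} (hm₀ : 0 < m) (hm : ∀ j : ℕ, m ≤ ‖c + j‖) (N : ℕ) :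
    ‖hypTerm b c z N‖ ≤ ‖(ascPochhammer 𝕜 N).eval b‖ / m ^ N * ‖z‖ ^ N := by
  rw [hypTerm, norm_mul, norm_div, norm_pow]
  gcongr
  exact pow_le_norm_ascPochhammer_eval hm₀.le hm N

lemma norm_tsum_hypTerm_nat_add_le (h : ∀ j : ℕ, ‖b + j‖ ≤ ‖c + j‖) (hz : ‖z‖ < 1) (N : ℕ) :
    ‖∑' n, hypTerm b c z (n + N)‖ ≤ ‖hypTerm b c z N‖ / (1 - ‖z‖) := by
  rw [div_eq_mul_inv]
  exact tsum_of_norm_bounded ((hasSum_geometric_of_lt_one (norm_nonneg z) hz).mul_left _)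
    (norm_hypTerm_add_le h N)

lemma summable_hypTerm [CompleteSpace 𝕜] (h : ∀ j : ℕ, ‖b + j‖ ≤ ‖c + j‖) (hz : ‖z‖ < 1) :
    Summable (hypTerm b c z) :=
  .of_norm_bounded ((summable_geometric_of_lt_one (norm_nonneg z) hz).mul_left ‖hypTerm b c z 0‖)
    (norm_hypTerm_add_le h 0)

lemma sum_range_hypTerm {N : ℕ} (hc : (ascPochhammer 𝕜 N).eval c ≠ 0) :
    ∑ n ∈ Finset.range (N + 1), hypTerm b c z n =
      (∑ n ∈ Finset.range (N + 1), (ascPochhammer 𝕜 n).eval b * z ^ n *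
        (ascPochhammer 𝕜 (N - n)).eval (c + n)) / (ascPochhammer 𝕜 N).eval c := by
  rw [Finset.sum_div]
  refine Finset.sum_congr rfl fun n hn => ?_
  have hsplit := ascPochhammer_eval_add c n (N - n)
  rw [Nat.add_sub_cancel' (Nat.lt_succ_iff.mp (Finset.mem_range.mp hn))] at hsplit
  rw [hsplit] at hc ⊢
  rw [hypTerm, mul_div_mul_right _ _ (right_ne_zero_of_mul hc)]
  ring

end hypTerm

lemma hypF_one_eq_tsum (b c z : ℂ) : hypF b 1 c z = ∑' n, hypTerm b c z n := by
  refine tsum_congr fun n => ?_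
  rw [hypTerm, ascPochhammer_eval_one,
    mul_div_mul_right _ _ (by exact_mod_cast n.factorial_ne_zero)]

lemma isBigO_one_div_pow_of_le {m n : ℕ} (h : m ≤ n) :
    (fun a : ℝ => 1 / a ^ n) =O[atTop] fun a => 1 / a ^ m := by
  refine IsBigO.of_bound' ?_
  filter_upwards [eventually_ge_atTop 1] with a ha
  have ha₀ : 0 < a := zero_lt_one.trans_le ha
  rw [Real.norm_of_nonneg (by positivity), Real.norm_of_nonneg (by positivity)]
  exact one_div_le_one_div_of_le (by positivity) (pow_le_pow_right₀ ha h)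

noncomputable def expansionRemainder : ℝ[X] :=
  C (-1939457/131072) * X ^ 14 + C (8329489909/262144) * X ^ 12
    + C (-6589521359053/1048576) * X ^ 10 + C (391044279806543/1048576) * X ^ 8
    + C (-149637226156326337/33554432) * X ^ 6 + C (-1233439184127835681/67108864) * X ^ 4
    + C (-6959459616272047575/134217728) * X ^ 2 + C (-3186683838305296875/268435456)

lemma degree_expansionRemainder_le : expansionRemainder.degree ≤ 14 := by
  unfold expansionRemainder; compute_degree!

section

variable (a : ℝ)

lemma norm_half_add_le_norm (j : ℕ) : ‖(1 / 2 : ℂ) + j‖ ≤ ‖5 / 4 - I * a / 2 + j‖ := by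
  calc ‖(1 / 2 : ℂ) + j‖ ≤ ‖(1 / 2 : ℂ)‖ + ‖(j : ℂ)‖ := norm_add_le _ _
    _ ≤ (5 / 4 - I * a / 2 + j).re := by norm_num
    _ ≤ ‖5 / 4 - I * a / 2 + j‖ := re_le_norm _

lemma abs_div_two_le_norm (j : ℕ) : |a| / 2 ≤ ‖5 / 4 - I * a / 2 + j‖ := by
  calc |a| / 2 = |(5 / 4 - I * a / 2 + j).im| := by simp [abs_div]
    _ ≤ ‖5 / 4 - I * a / 2 + j‖ := abs_im_le_norm _

lemma two_mul_abs_le_norm : 2 * |a| ≤ ‖1 - 2 * I * a‖ := by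
  calc 2 * |a| = |(1 - 2 * I * a).im| := by simp [abs_mul]
    _ ≤ ‖1 - 2 * I * a‖ := abs_im_le_norm _

noncomputable def truncNum : ℂ :=
  ∑ n ∈ Finset.range 8,
    (ascPochhammer ℂ n).eval (1 / 2) * (1 / 2) ^ n *
      (ascPochhammer ℂ (7 - n)).eval (5 / 4 - I * a / 2 + n)

noncomputable def truncDen : ℂ := (1 - 2 * I * a) * (ascPochhammer ℂ 7).eval (5 / 4 - I * a / 2)

lemma pow_div_le_norm_truncDen : |a| ^ 8 / 64 ≤ ‖truncDen a‖ := by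
  rw [truncDen, norm_mul]
  calc |a| ^ 8 / 64 = 2 * |a| * (|a| / 2) ^ 7 := by ring
    _ ≤ _ := by
      gcongr
      · exact two_mul_abs_le_norm a
      · exact pow_le_norm_ascPochhammer_eval (by positivity) (abs_div_two_le_norm a) 7

lemma eval_expansionRemainder :
    16 * a ^ 7 * ((truncNum a).im * (truncDen a).re - (truncNum a).re * (truncDen a).im) -
      normSq (truncDen a) * (8 * a ^ 6 + 4 * a ^ 4 + 14 * a ^ 2 + 139) =
        expansionRemainder.eval a := by
  simp only [truncNum, truncDen, Finset.sum_range_succ, Finset.sum_range_zero,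
    ascPochhammer_succ_eval, ascPochhammer_zero, eval_one, Nat.cast_ofNat]
  norm_num [normSq_apply, expansionRemainder]
  ring

variable {a}

lemma inv_mul_sum_range_hypTerm (ha : a ≠ 0) :
    (1 - 2 * I * a)⁻¹ * ∑ n ∈ Finset.range 8, hypTerm (1 / 2) (5 / 4 - I * a / 2) (1 / 2) n =
      truncNum a / truncDen a := by
  have hc : (ascPochhammer ℂ 7).eval (5 / 4 - I * a / 2) ≠ 0 := by
    refine norm_pos_iff.mp (lt_of_lt_of_le ?_
      (pow_le_norm_ascPochhammer_eval (by positivity) (abs_div_two_le_norm a) 7))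
    positivity
  rw [sum_range_hypTerm (N := 7) hc, truncDen, mul_comm (1 - 2 * I * a), inv_mul_eq_div, div_div]
  rfl

lemma im_truncNum_div_truncDen_sub (ha : a ≠ 0) :
    (truncNum a / truncDen a).im -
        (1 / (2 * a) + 1 / (4 * a ^ 3) + 7 / (8 * a ^ 5) + 139 / (16 * a ^ 7)) =
      expansionRemainder.eval a / (16 * a ^ 7 * normSq (truncDen a)) := by
  have hQ : normSq (truncDen a) ≠ 0 := by
    rw [normSq_eq_norm_sq]
    exact pow_ne_zero _ ((lt_of_lt_of_le (by positivity) (pow_div_le_norm_truncDen a)).ne')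
  rw [← eval_expansionRemainder, div_im]
  field_simp
  ring

end

lemma isBigO_im_truncation :
    (fun a : ℝ => (truncNum a / truncDen a).im -
      (1 / (2 * a) + 1 / (4 * a ^ 3) + 7 / (8 * a ^ 5) + 139 / (16 * a ^ 7))) =O[atTop]
      fun a => 1 / a ^ 9 := by
  have hnum : (fun a => expansionRemainder.eval a) =O[atTop] fun a : ℝ => a ^ 14 := by
    simpa using isBigO_atTop_of_degree_le expansionRemainder (X ^ 14)
      (degree_expansionRemainder_le.trans_eq (degree_X_pow 14).symm)
  have hden : (fun a => (16 * a ^ 7 * normSq (truncDen a))⁻¹) =O[atTop]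
      fun a : ℝ => (a ^ 23)⁻¹ := by
    refine IsBigO.of_bound 256 ?_
    filter_upwards [eventually_gt_atTop 0] with a ha
    have hQ : a ^ 16 / 4096 ≤ normSq (truncDen a) := by
      have := pow_div_le_norm_truncDen a
      rw [abs_of_pos ha] at this
      rw [normSq_eq_norm_sq]
      calc a ^ 16 / 4096 = (a ^ 8 / 64) ^ 2 := by ring
        _ ≤ _ := by gcongr
    have hQ₀ : 0 < normSq (truncDen a) := lt_of_lt_of_le (by positivity) hQ
    rw [Real.norm_of_nonneg (by positivity), Real.norm_of_nonneg (by positivity)]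
    calc (16 * a ^ 7 * normSq (truncDen a))⁻¹ ≤ (a ^ 23 / 256)⁻¹ := by
          refine inv_anti₀ (by positivity) ?_
          calc a ^ 23 / 256 = 16 * a ^ 7 * (a ^ 16 / 4096) := by ring
            _ ≤ 16 * a ^ 7 * normSq (truncDen a) := by gcongr
      _ = 256 * (a ^ 23)⁻¹ := by rw [inv_div, div_eq_mul_inv]
  refine (hnum.mul hden).congr' ?_ ?_
  · filter_upwards [eventually_ne_atTop 0] with a ha
    rw [im_truncNum_div_truncDen_sub ha, div_eq_mul_inv]
  · filter_upwards [eventually_ne_atTop 0] with a ha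
    field_simp

lemma isBigO_im_tail :
    (fun a : ℝ => ((1 - 2 * I * a)⁻¹ *
      ∑' n, hypTerm (1 / 2) (5 / 4 - I * a / 2) (1 / 2) (n + 8)).im) =O[atTop]
      fun a => 1 / a ^ 9 := by
  set K := ‖(ascPochhammer ℂ 8).eval (1 / 2 : ℂ)‖
  refine IsBigO.of_bound K ?_
  filter_upwards [eventually_gt_atTop 0] with a ha
  have hw : ‖(1 - 2 * I * a)⁻¹‖ ≤ (2 * a)⁻¹ := by
    rw [norm_inv]
    exact inv_anti₀ (by positivity) (by simpa [abs_of_pos ha] using two_mul_abs_le_norm a)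
  have h12 : ‖(1 / 2 : ℂ)‖ = 1 / 2 := by norm_num
  have htail := norm_tsum_hypTerm_nat_add_le (z := (1 / 2 : ℂ)) (norm_half_add_le_norm a)
    (by norm_num) 8
  have hterm := norm_hypTerm_le (b := (1 / 2 : ℂ)) (z := (1 / 2 : ℂ)) (by positivity)
    (abs_div_two_le_norm a) 8
  rw [h12] at htail hterm
  rw [abs_of_pos ha] at hterm
  rw [Real.norm_of_nonneg (show 0 ≤ 1 / a ^ 9 by positivity)]
  calc ‖((1 - 2 * I * a)⁻¹ * ∑' n, hypTerm (1 / 2) (5 / 4 - I * a / 2) (1 / 2) (n + 8)).im‖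
      ≤ ‖(1 - 2 * I * a)⁻¹‖ * ‖∑' n, hypTerm (1 / 2) (5 / 4 - I * a / 2) (1 / 2) (n + 8)‖ := by
        rw [Real.norm_eq_abs, ← norm_mul]; exact abs_im_le_norm _
    _ ≤ (2 * a)⁻¹ * (K / (a / 2) ^ 8 * (1 / 2) ^ 8 / (1 - 1 / 2)) := by
        gcongr
        exact htail.trans (by gcongr)
    _ = K * (1 / a ^ 9) := by
        field_simp; ring

lemma im_inv_mul_hypF_eq {a : ℝ} (ha : a ≠ 0) :
    ((1 - 2 * I * a)⁻¹ * hypF (1 / 2) 1 (5 / 4 - I * a / 2) (1 / 2)).im =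
      (truncNum a / truncDen a).im +
        ((1 - 2 * I * a)⁻¹ * ∑' n, hypTerm (1 / 2) (5 / 4 - I * a / 2) (1 / 2) (n + 8)).im := by
  have hsum := summable_hypTerm (z := (1 / 2 : ℂ)) (norm_half_add_le_norm a) (by norm_num)
  rw [hypF_one_eq_tsum, ← hsum.sum_add_tsum_nat_add 8, mul_add, add_im,
    inv_mul_sum_range_hypTerm ha]

/-- As `a → ∞`, `Y(a) = Im{(1-2ia)⁻¹ F(1/2,1;5/4-ia/2;1/2)}` has the asymptotic
expansion `Y(a) ~ 1/(2a) + 1/(4a³) + 7/(8a⁵) + 139/(16a⁷) + ⋯`;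
in particular `Y(a) = 1/(2a) + O(a⁻³)`. -/
theorem stmt10 (Y : ℝ → ℝ)
    (hY : ∀ a : ℝ, Y a = ((1 - 2 * Complex.I * a)⁻¹ *
        hypF (1 / 2) 1 (5 / 4 - Complex.I * a / 2) (1 / 2)).im) :
    ((fun a : ℝ => Y a - (1 / (2 * a) + 1 / (4 * a ^ 3) + 7 / (8 * a ^ 5) +
        139 / (16 * a ^ 7))) =O[atTop] fun a : ℝ => 1 / a ^ 9) ∧
    ((fun a : ℝ => Y a - 1 / (2 * a)) =O[atTop] fun a : ℝ => 1 / a ^ 3) := by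
  have hexp : (fun a : ℝ => Y a - (1 / (2 * a) + 1 / (4 * a ^ 3) + 7 / (8 * a ^ 5) +
      139 / (16 * a ^ 7))) =O[atTop] fun a : ℝ => 1 / a ^ 9 := by
    refine (isBigO_im_truncation.add isBigO_im_tail).congr' ?_ EventuallyEq.rfl
    filter_upwards [eventually_ne_atTop 0] with a ha
    rw [hY, im_inv_mul_hypF_eq ha]
    ring
  refine ⟨hexp, ?_⟩
  have hcorr : (fun a : ℝ => 1 / (4 * a ^ 3) + 7 / (8 * a ^ 5) + 139 / (16 * a ^ 7)) =O[atTop]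
      fun a : ℝ => 1 / a ^ 3 :=
    (((isBigO_refl _ _).const_mul_left (1 / 4)).add
      ((isBigO_one_div_pow_of_le (by norm_num : 3 ≤ 5)).const_mul_left (7 / 8))).add
      ((isBigO_one_div_pow_of_le (by norm_num : 3 ≤ 7)).const_mul_left (139 / 16))
      |>.congr_left fun a => by ring
  exact ((hexp.trans (isBigO_one_div_pow_of_le (by norm_num))).add hcorr).congr_left
    fun a => by ring
end

section
/- Let 0 < ρ₁ < ρ₂, z₀ ∈ ℂ, let H(u,z) be analytic in z on the disk D = {z : |z - z₀| < ρ₂} for each u > 0, and let h_s(z) (s = 0,1,2,…) be analytic in D except possibly for an isolated singularity at z₀. If H(u,z) ~ Σ_{s≥0} h_s(z)/u^s as u → ∞, uniformly on the annulus ρ₁ < |z - z₀| < ρ₂, then each h_s has at worst a removable singularity at z₀, and the asymptotic expansion holds (uniformly on compacts) for all z ∈ D. -/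
/-!
By the maximum modulus principle, a function holomorphic on the disk and bounded by `B` on the
annulus is bounded by `B` on the whole disk. Hence the rescaled remainders
`u ^ s * (H u - ∑ t < s, g t / u ^ t)`, which tend to `h s` uniformly on the annulus, are uniformly
Cauchy on the whole disk; their limit is the holomorphic extension `g s` of `h s`, and it agrees
with `h s` on the punctured disk by the identity theorem. The same principle carries the remainder
bound `C / u ^ n` from the annulus to the whole disk.
-/

open Metric Filter Topology Set

theorem norm_le_of_forall_mem_annulus_norm_le {E F : Type*} [NormedAddCommGroup E]
    [NormedSpace ℂ E] [Nontrivial E] [NormedAddCommGroup F] [NormedSpace ℂ F] {f : E → F}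
    {z₀ : E} {ρ₁ ρ₂ B : ℝ} (hρ : ρ₁ < ρ₂)
    (hf : DifferentiableOn ℂ f (ball z₀ ρ₂))
    (hB : ∀ z ∈ ball z₀ ρ₂ \ closedBall z₀ ρ₁, ‖f z‖ ≤ B) :
    ∀ z ∈ ball z₀ ρ₂, ‖f z‖ ≤ B := by
  intro z hz
  by_cases hz₁ : z ∈ closedBall z₀ ρ₁
  swap
  · exact hB z ⟨hz, hz₁⟩
  obtain ⟨r, hρ₁r, hrρ₂⟩ := exists_between hρ
  have hr : r ≠ 0 := (dist_nonneg.trans hz₁ |>.trans_lt hρ₁r).ne'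
  refine Complex.norm_le_of_forall_mem_frontier_norm_le isBounded_ball
    ((hf.mono (closedBall_subset_ball hrρ₂)).diffContOnCl_ball le_rfl) (fun w hw => hB w ?_) ?_
  · rw [frontier_ball z₀ hr] at hw
    exact ⟨sphere_subset_ball hrρ₂ hw, by simp [mem_sphere.1 hw, hρ₁r]⟩
  · rw [closure_ball z₀ hr]
    exact closedBall_subset_closedBall hρ₁r.le hz₁

theorem isPreconnected_ball_diff_singleton {E : Type*} [NormedAddCommGroup E] [NormedSpace ℝ E]
    (h : 1 < Module.rank ℝ E) (x : E) (r : ℝ) : IsPreconnected (ball x r \ {x}) := by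
  have hpolar : ball x r \ {x} = (fun p : ℝ × E => x + p.1 • p.2) '' (Ioo 0 r ×ˢ sphere 0 1) := by
    ext z
    constructor
    · rintro ⟨hz, hzx⟩
      have hd : 0 < ‖z - x‖ := norm_pos_iff.2 (sub_ne_zero.2 hzx)
      refine ⟨(‖z - x‖, ‖z - x‖⁻¹ • (z - x)), ⟨⟨hd, mem_ball_iff_norm.1 hz⟩, ?_⟩, ?_⟩
      · simp [norm_smul, hd.ne']
      · simp [smul_smul, hd.ne']
    · rintro ⟨⟨t, v⟩, ⟨⟨ht₀, htr⟩, hv⟩, rfl⟩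
      rw [mem_sphere_zero_iff_norm] at hv
      have hnorm : ‖t • v‖ = t := by rw [norm_smul, hv, Real.norm_of_nonneg ht₀.le, mul_one]
      refine ⟨by simpa [hnorm] using htr, fun hx => ?_⟩
      rw [mem_singleton_iff, add_eq_left] at hx
      exact ht₀.ne' (by rw [← hnorm]; simpa using hx)
  rw [hpolar]
  exact (isPreconnected_Ioo.prod (isPreconnected_sphere h 0 1)).image _ (by fun_prop)

theorem eqOn_ball_diff_singleton_of_eqOn_annulus {E : Type*} [NormedAddCommGroup E]
    [NormedSpace ℂ E] {f g : ℂ → E} {z₀ : ℂ} {ρ₁ ρ₂ : ℝ} (hρ₁ : 0 ≤ ρ₁) (hρ : ρ₁ < ρ₂)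
    (hf : AnalyticOnNhd ℂ f (ball z₀ ρ₂ \ {z₀})) (hg : AnalyticOnNhd ℂ g (ball z₀ ρ₂ \ {z₀}))
    (hfg : EqOn f g (ball z₀ ρ₂ \ closedBall z₀ ρ₁)) : EqOn f g (ball z₀ ρ₂ \ {z₀}) := by
  obtain ⟨r, hρ₁r, hrρ₂⟩ := exists_between hρ
  have hr : 0 < r := hρ₁.trans_lt hρ₁r
  have hw : z₀ + r ∈ ball z₀ ρ₂ \ closedBall z₀ ρ₁ := by
    simp [dist_eq_norm, abs_of_pos hr, hρ₁r, hrρ₂]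
  refine hf.eqOn_of_preconnected_of_eventuallyEq hg
    (isPreconnected_ball_diff_singleton (by simp [Complex.rank_real_complex]) z₀ ρ₂)
    (sdiff_subset_sdiff_right (singleton_subset_iff.2 (mem_closedBall_self hρ₁)) hw)
    (hfg.eventuallyEq_of_mem ((isOpen_ball.sdiff isClosed_closedBall).mem_nhds hw))

section UniformLimit

variable {ι E : Type*} [NormedAddCommGroup E] [NormedSpace ℂ E] {l : Filter ι} {F : ι → ℂ → E}
  {z₀ : ℂ} {ρ₁ ρ₂ : ℝ}

theorem UniformCauchySeqOn.of_annulus (hρ : ρ₁ < ρ₂)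
    (hF : ∀ᶠ i in l, DifferentiableOn ℂ (F i) (ball z₀ ρ₂))
    (h : UniformCauchySeqOn F l (ball z₀ ρ₂ \ closedBall z₀ ρ₁)) :
    UniformCauchySeqOn F l (ball z₀ ρ₂) := by
  intro U hU
  obtain ⟨ε, hε, hεU⟩ := mem_uniformity_dist.1 hU
  filter_upwards [h _ (dist_mem_uniformity (half_pos hε)), hF.prod_mk hF]
    with p hp ⟨hp₁, hp₂⟩ z hz
  refine hεU (lt_of_le_of_lt ?_ (half_lt_self hε))
  rw [dist_eq_norm]
  exact norm_le_of_forall_mem_annulus_norm_le hρ (hp₁.sub hp₂)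
    (fun w hw => by rw [Pi.sub_apply, ← dist_eq_norm]; exact (hp w hw).le) z hz

theorem UniformCauchySeqOn.exists_differentiableOn_tendstoUniformlyOn [CompleteSpace E] [l.NeBot]
    {U : Set ℂ} (hU : IsOpen U) (hF : ∀ᶠ i in l, DifferentiableOn ℂ (F i) U)
    (h : UniformCauchySeqOn F l U) :
    ∃ g, DifferentiableOn ℂ g U ∧ TendstoUniformlyOn F g l U := by
  choose! g hg using fun z (hz : z ∈ U) => CompleteSpace.complete (h.cauchy_map hz)
  have hFg := h.tendstoUniformlyOn_of_tendsto hg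
  exact ⟨g, hFg.tendstoLocallyUniformlyOn.differentiableOn hF hU, hFg⟩

theorem exists_differentiableOn_eqOn_of_tendstoUniformlyOn_annulus [CompleteSpace E] [l.NeBot]
    {f : ℂ → E} (hρ : ρ₁ < ρ₂) (hF : ∀ᶠ i in l, DifferentiableOn ℂ (F i) (ball z₀ ρ₂))
    (hf : TendstoUniformlyOn F f l (ball z₀ ρ₂ \ closedBall z₀ ρ₁)) :
    ∃ g, DifferentiableOn ℂ g (ball z₀ ρ₂) ∧ EqOn g f (ball z₀ ρ₂ \ closedBall z₀ ρ₁) := by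
  obtain ⟨g, hg, hFg⟩ := UniformCauchySeqOn.exists_differentiableOn_tendstoUniformlyOn
    isOpen_ball hF (hf.uniformCauchySeqOn.of_annulus hρ hF)
  exact ⟨g, hg, fun z hz => tendsto_nhds_unique (hFg.tendsto_at hz.1) (hf.tendsto_at hz)⟩

end UniformLimit

theorem tendstoUniformlyOn_of_norm_sub_le_div {α E : Type*} [NormedAddCommGroup E]
    {F : ℝ → α → E} {f : α → E} {s : Set α} {C u₀ : ℝ}
    (h : ∀ u, u₀ ≤ u → ∀ z ∈ s, ‖F u z - f z‖ ≤ C / u) : TendstoUniformlyOn F f atTop s := by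
  rw [Metric.tendstoUniformlyOn_iff]
  intro ε hε
  have hC : Tendsto (fun u : ℝ => C / u) atTop (𝓝 0) := tendsto_const_nhds.div_atTop tendsto_id
  filter_upwards [hC.eventually (gt_mem_nhds hε), eventually_ge_atTop u₀] with u hu hu₀ z hz
  rw [dist_comm, dist_eq_norm]
  exact (h u hu₀ z hz).trans_lt hu

section AsymptoticExpansion

open Finset

def HasUniformAsymptoticExpansionOn (H : ℝ → ℂ → ℂ) (h : ℕ → ℂ → ℂ) (S : Set ℂ) : Prop :=
  ∀ n : ℕ, ∃ C u₀ : ℝ, ∀ u : ℝ, u₀ ≤ u → ∀ z ∈ S,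
    ‖H u z - ∑ s ∈ range n, h s z / (u : ℂ) ^ s‖ ≤ C / u ^ n

namespace HasUniformAsymptoticExpansionOn

variable {H : ℝ → ℂ → ℂ} {h g : ℕ → ℂ → ℂ} {S T : Set ℂ} {z₀ : ℂ} {ρ₁ ρ₂ : ℝ}

theorem mono (hexp : HasUniformAsymptoticExpansionOn H h S) (hTS : T ⊆ S) :
    HasUniformAsymptoticExpansionOn H h T := fun n =>
  (hexp n).imp fun _ => Exists.imp fun _ hC u hu z hz => hC u hu z (hTS hz)

theorem congr_coeffs (hexp : HasUniformAsymptoticExpansionOn H h S)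
    (hgh : ∀ s, EqOn (g s) (h s) S) : HasUniformAsymptoticExpansionOn H g S := by
  intro n
  obtain ⟨C, u₀, hC⟩ := hexp n
  refine ⟨C, u₀, fun u hu z hz => ?_⟩
  rw [sum_congr rfl fun s _ => by rw [hgh s hz]]
  exact hC u hu z hz

theorem exists_differentiableOn_eqOn_coeff (hρ : ρ₁ < ρ₂)
    (hH : ∀ u : ℝ, 0 < u → DifferentiableOn ℂ (H u) (ball z₀ ρ₂))
    (hexp : HasUniformAsymptoticExpansionOn H h (ball z₀ ρ₂ \ closedBall z₀ ρ₁))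
    (s : ℕ) (hg : ∀ t < s, DifferentiableOn ℂ (g t) (ball z₀ ρ₂) ∧
      EqOn (g t) (h t) (ball z₀ ρ₂ \ closedBall z₀ ρ₁)) :
    ∃ f, DifferentiableOn ℂ f (ball z₀ ρ₂) ∧ EqOn f (h s) (ball z₀ ρ₂ \ closedBall z₀ ρ₁) := by
  obtain ⟨C, u₀, hC⟩ := hexp (s + 1)
  refine exists_differentiableOn_eqOn_of_tendstoUniformlyOn_annulus hρ
    (F := fun (u : ℝ) z => (u : ℂ) ^ s * (H u z - ∑ t ∈ range s, g t z / (u : ℂ) ^ t)) ?_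
    (tendstoUniformlyOn_of_norm_sub_le_div (C := C) (u₀ := max u₀ 1) fun u hu₁ z hz => ?_)
  · filter_upwards [eventually_gt_atTop 0] with u hu
    exact ((hH u hu).sub (DifferentiableOn.fun_sum fun t ht =>
      (hg t (mem_range.1 ht)).1.div_const _)).const_mul _
  · have hu : 0 < u := zero_lt_one.trans_le (le_of_max_le_right hu₁)
    have hgh : ∑ t ∈ range s, g t z / (u : ℂ) ^ t = ∑ t ∈ range s, h t z / (u : ℂ) ^ t :=
      sum_congr rfl fun t ht => by rw [(hg t (mem_range.1 ht)).2 hz]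
    have hus : (u : ℂ) ^ s ≠ 0 := pow_ne_zero _ (Complex.ofReal_ne_zero.2 hu.ne')
    have hid : (u : ℂ) ^ s * (H u z - ∑ t ∈ range s, h t z / (u : ℂ) ^ t) - h s z =
        (u : ℂ) ^ s * (H u z - ∑ t ∈ range (s + 1), h t z / (u : ℂ) ^ t) := by
      rw [sum_range_succ]
      field_simp
      ring
    calc ‖(u : ℂ) ^ s * (H u z - ∑ t ∈ range s, g t z / (u : ℂ) ^ t) - h s z‖
        = u ^ s * ‖H u z - ∑ t ∈ range (s + 1), h t z / (u : ℂ) ^ t‖ := by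
          rw [hgh, hid, norm_mul, norm_pow, Complex.norm_real, Real.norm_of_nonneg hu.le]
      _ ≤ u ^ s * (C / u ^ (s + 1)) := by gcongr; exact hC u (le_of_max_le_left hu₁) z hz
      _ = C / u := by field_simp; ring

theorem exists_differentiableOn_eqOn_coeffs (hρ : ρ₁ < ρ₂)
    (hH : ∀ u : ℝ, 0 < u → DifferentiableOn ℂ (H u) (ball z₀ ρ₂))
    (hexp : HasUniformAsymptoticExpansionOn H h (ball z₀ ρ₂ \ closedBall z₀ ρ₁)) :
    ∃ g : ℕ → ℂ → ℂ, ∀ s, DifferentiableOn ℂ (g s) (ball z₀ ρ₂) ∧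
      EqOn (g s) (h s) (ball z₀ ρ₂ \ closedBall z₀ ρ₁) := by
  have hfinite : ∀ n, ∃ g : ℕ → ℂ → ℂ, ∀ s < n, DifferentiableOn ℂ (g s) (ball z₀ ρ₂) ∧
      EqOn (g s) (h s) (ball z₀ ρ₂ \ closedBall z₀ ρ₁) := by
    intro n
    induction n with
    | zero => exact ⟨0, by simp⟩
    | succ n ih =>
      obtain ⟨g, hg⟩ := ih
      obtain ⟨f, hf⟩ := hexp.exists_differentiableOn_eqOn_coeff hρ hH n hg
      refine ⟨Function.update g n f, fun s hs => ?_⟩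
      rcases Nat.lt_succ_iff_lt_or_eq.1 hs with hs | rfl
      · simpa [Function.update_of_ne hs.ne] using hg s hs
      · simpa using hf
  have hcoeff (s : ℕ) : ∃ f, DifferentiableOn ℂ f (ball z₀ ρ₂) ∧
      EqOn f (h s) (ball z₀ ρ₂ \ closedBall z₀ ρ₁) := by
    obtain ⟨g, hg⟩ := hfinite (s + 1)
    exact ⟨g s, hg s (Nat.lt_succ_self s)⟩
  choose g hg using hcoeff
  exact ⟨g, hg⟩

theorem of_annulus (hρ : ρ₁ < ρ₂)
    (hH : ∀ u : ℝ, 0 < u → DifferentiableOn ℂ (H u) (ball z₀ ρ₂))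
    (hexp : HasUniformAsymptoticExpansionOn H g (ball z₀ ρ₂ \ closedBall z₀ ρ₁))
    (hg : ∀ s, DifferentiableOn ℂ (g s) (ball z₀ ρ₂)) :
    HasUniformAsymptoticExpansionOn H g (ball z₀ ρ₂) := by
  intro n
  obtain ⟨C, u₀, hC⟩ := hexp n
  refine ⟨C, max u₀ 1, fun u hu => norm_le_of_forall_mem_annulus_norm_le hρ ?_
    (fun z hz => hC u (le_of_max_le_left hu) z hz)⟩
  exact (hH u (zero_lt_one.trans_le (le_of_max_le_right hu))).sub
    (DifferentiableOn.fun_sum fun s _ => (hg s).div_const _)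

end HasUniformAsymptoticExpansionOn

end AsymptoticExpansion

/-- If `H(u,·)` is analytic on a disk, the `h_s` are analytic on the punctured disk,
and `H(u,z) ~ Σ h_s(z)/u^s` uniformly on an annulus, then each `h_s` extends
analytically to the whole disk and the expansion holds uniformly on compacts. -/
theorem stmt11 (ρ₁ ρ₂ : ℝ) (hρ₁ : 0 < ρ₁) (hρ : ρ₁ < ρ₂) (z₀ : ℂ)
    (H : ℝ → ℂ → ℂ) (h : ℕ → ℂ → ℂ)
    (hH : ∀ u : ℝ, 0 < u → AnalyticOn ℂ (H u) (ball z₀ ρ₂))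
    (hh : ∀ s : ℕ, AnalyticOn ℂ (h s) (ball z₀ ρ₂ \ {z₀}))
    (hexp : ∀ n : ℕ, ∃ C u₀ : ℝ, ∀ u : ℝ, u₀ ≤ u → ∀ z : ℂ,
      ρ₁ < ‖z - z₀‖ → ‖z - z₀‖ < ρ₂ →
      ‖H u z - ∑ s ∈ Finset.range n, h s z / (u : ℂ) ^ s‖ ≤ C / u ^ n) :
    ∃ g : ℕ → ℂ → ℂ,
      (∀ s : ℕ, AnalyticOn ℂ (g s) (ball z₀ ρ₂)) ∧
      (∀ s : ℕ, ∀ z ∈ ball z₀ ρ₂ \ {z₀}, g s z = h s z) ∧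
      (∀ K : Set ℂ, IsCompact K → K ⊆ ball z₀ ρ₂ →
        ∀ n : ℕ, ∃ C u₀ : ℝ, ∀ u : ℝ, u₀ ≤ u → ∀ z ∈ K,
          ‖H u z - ∑ s ∈ Finset.range n, g s z / (u : ℂ) ^ s‖ ≤ C / u ^ n) := by
  have hHd (u : ℝ) (hu : 0 < u) : DifferentiableOn ℂ (H u) (ball z₀ ρ₂) :=
    (hH u hu).differentiableOn
  have hann : HasUniformAsymptoticExpansionOn H h (ball z₀ ρ₂ \ closedBall z₀ ρ₁) := fun n =>
    (hexp n).imp fun _ => Exists.imp fun _ hC u hu z hz =>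
      hC u hu z (by simpa [dist_eq_norm] using hz.2) (by simpa [dist_eq_norm] using hz.1)
  obtain ⟨g, hg⟩ := hann.exists_differentiableOn_eqOn_coeffs hρ hHd
  have hball := (hann.congr_coeffs fun s => (hg s).2).of_annulus hρ hHd fun s => (hg s).1
  refine ⟨g, fun s => ((hg s).1.analyticOnNhd isOpen_ball).analyticOn, fun s => ?_,
    fun K _ hK => hball.mono hK⟩
  exact eqOn_ball_diff_singleton_of_eqOn_annulus hρ₁.le hρ
    (((hg s).1.analyticOnNhd isOpen_ball).mono sdiff_subset)
    ((isOpen_ball.sdiff isClosed_singleton).analyticOn_iff_analyticOnNhd.1 (hh s)) (hg s).2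
end

section
/- Under the hypotheses of the annulus-asymptotics theorem, each Laurent coefficient a_{s,j} of h_s at z₀ with j < 0 vanishes; equivalently, for every nonnegative integer r and every s, the contour integral of (z - z₀)^r h_s(z) over a circle centered at z₀ inside the annulus is zero. -/
/-!
Multiplying by `(z - z₀)^r` and integrating over a circle inside the annulus turns the uniform
expansion `H(u, z) ~ ∑ h_s(z) / u^s` into an asymptotic expansion, as `u → ∞`, of the number
`∮ (z - z₀)^r H(u, z) dz` with coefficients `∮ (z - z₀)^r h_s(z) dz`. Since `H(u, ·)` is analytic
on the whole disk, Cauchy–Goursat makes that number zero, and an asymptotic expansion of zero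
has only zero coefficients.
-/

open Metric Filter Finset Topology

def IsAsymptoticExpansionAtTop (f : ℝ → ℂ) (a : ℕ → ℂ) : Prop :=
  ∀ n : ℕ, ∃ C u₀ : ℝ, ∀ u : ℝ, u₀ ≤ u → ‖f u - ∑ s ∈ range n, a s / (u : ℂ) ^ s‖ ≤ C / u ^ n

def IsUniformAsymptoticExpansionOn (H : ℝ → ℂ → ℂ) (h : ℕ → ℂ → ℂ) (S : Set ℂ) : Prop :=
  ∀ n : ℕ, ∃ C u₀ : ℝ, ∀ u : ℝ, u₀ ≤ u → ∀ z ∈ S,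
    ‖H u z - ∑ s ∈ range n, h s z / (u : ℂ) ^ s‖ ≤ C / u ^ n

namespace IsAsymptoticExpansionAtTop

variable {f g : ℝ → ℂ} {a : ℕ → ℂ}

theorem congr (ha : IsAsymptoticExpansionAtTop f a) (hfg : f =ᶠ[atTop] g) :
    IsAsymptoticExpansionAtTop g a := by
  intro n
  obtain ⟨C, u₀, hC⟩ := ha n
  obtain ⟨u₁, hfg⟩ := eventually_atTop.1 hfg
  exact ⟨C, max u₀ u₁, fun u hu => hfg u (le_of_max_le_right hu) ▸ hC u (le_of_max_le_left hu)⟩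

theorem eq_zero (ha : IsAsymptoticExpansionAtTop 0 a) : a = 0 := by
  funext s
  induction s using Nat.strong_induction_on with
  | _ s ih =>
  obtain ⟨C, u₀, hC⟩ := ha (s + 1)
  have hsum (u : ℝ) : ∑ t ∈ range (s + 1), a t / (u : ℂ) ^ t = a s / (u : ℂ) ^ s := by
    rw [sum_range_succ, sum_eq_zero fun t ht => by rw [ih t (mem_range.1 ht)]; simp, zero_add]
  have hbound (u : ℝ) (hu : max u₀ 1 ≤ u) : ‖a s‖ ≤ C / u := by
    have hu0 : 0 < u := one_pos.trans_le (le_of_max_le_right hu)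
    have hs := hC u (le_of_max_le_left hu)
    rw [Pi.zero_apply, zero_sub, norm_neg, hsum, norm_div, norm_pow, Complex.norm_real,
      Real.norm_of_nonneg hu0.le] at hs
    calc ‖a s‖ = ‖a s‖ / u ^ s * u ^ s := by field_simp
      _ ≤ C / u ^ (s + 1) * u ^ s := by gcongr
      _ = C / u := by field_simp; ring
  have hlim : Tendsto (fun u : ℝ => C / u) atTop (𝓝 0) := tendsto_const_nhds.div_atTop tendsto_id
  exact norm_le_zero_iff.1 (ge_of_tendsto hlim (eventually_atTop.2 ⟨_, hbound⟩))

end IsAsymptoticExpansionAtTop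

namespace IsUniformAsymptoticExpansionOn

variable {H : ℝ → ℂ → ℂ} {h : ℕ → ℂ → ℂ} {S T : Set ℂ}

theorem mono (hexp : IsUniformAsymptoticExpansionOn H h S) (hTS : T ⊆ S) :
    IsUniformAsymptoticExpansionOn H h T := by
  intro n
  obtain ⟨C, u₀, hC⟩ := hexp n
  exact ⟨C, u₀, fun u hu z hz => hC u hu z (hTS hz)⟩

theorem mul_left (hexp : IsUniformAsymptoticExpansionOn H h S) {g : ℂ → ℂ} {M : ℝ}
    (hg : ∀ z ∈ S, ‖g z‖ ≤ M) :
    IsUniformAsymptoticExpansionOn (fun u z => g z * H u z) (fun s z => g z * h s z) S := by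
  intro n
  obtain ⟨C, u₀, hC⟩ := hexp n
  refine ⟨M * C, u₀, fun u hu z hz => ?_⟩
  have hfactor : g z * H u z - ∑ s ∈ range n, g z * h s z / (u : ℂ) ^ s
      = g z * (H u z - ∑ s ∈ range n, h s z / (u : ℂ) ^ s) := by
    simp only [mul_sub, mul_sum, mul_div_assoc]
  rw [hfactor, norm_mul, mul_div_assoc]
  exact mul_le_mul (hg z hz) (hC u hu z hz) (norm_nonneg _) ((norm_nonneg _).trans (hg z hz))

theorem circleIntegral {c : ℂ} {R : ℝ} (hR : 0 ≤ R)
    (hexp : IsUniformAsymptoticExpansionOn H h (sphere c R))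
    (hH : ∀ᶠ u in atTop, CircleIntegrable (H u) c R) (hh : ∀ s, CircleIntegrable (h s) c R) :
    IsAsymptoticExpansionAtTop (fun u => ∮ z in C(c, R), H u z)
      (fun s => ∮ z in C(c, R), h s z) := by
  intro n
  obtain ⟨C, u₀, hC⟩ := hexp n
  obtain ⟨u₁, hH⟩ := eventually_atTop.1 hH
  refine ⟨2 * Real.pi * R * C, max u₀ u₁, fun u hu => ?_⟩
  have hterm (s : ℕ) : CircleIntegrable (fun z => h s z / (u : ℂ) ^ s) c R := by
    exact IntervalIntegrable.div_const (hh s) _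
  have hintegral : (∮ z in C(c, R), H u z) - ∑ s ∈ range n, (∮ z in C(c, R), h s z) / (u : ℂ) ^ s
      = ∮ z in C(c, R), (H u z - ∑ s ∈ range n, h s z / (u : ℂ) ^ s) := by
    rw [circleIntegral.integral_sub (hH u (le_of_max_le_right hu))
      (CircleIntegrable.fun_sum _ fun s _ => hterm s), circleIntegral.integral_fun_sum
      fun s _ => hterm s]
    simp only [div_eq_inv_mul, circleIntegral.integral_const_mul]
  rw [hintegral, mul_div_assoc]
  exact circleIntegral.norm_integral_le_of_norm_le_const hR (hC u (le_of_max_le_left hu))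

end IsUniformAsymptoticExpansionOn

theorem circleIntegral_eq_zero_of_differentiableOn_ball {f : ℂ → ℂ} {c : ℂ} {R ρ : ℝ}
    (hR : 0 ≤ R) (hRρ : R < ρ) (hf : DifferentiableOn ℂ f (ball c ρ)) :
    ∮ z in C(c, R), f z = 0 :=
  DiffContOnCl.circleIntegral_eq_zero hR
    ((hf.mono (closure_ball_subset_closedBall.trans (closedBall_subset_ball hRρ))).diffContOnCl)

theorem stmt12_general (ρ₁ ρ₂ : ℝ) (hρ₁ : 0 < ρ₁) (z₀ : ℂ)
    (H : ℝ → ℂ → ℂ) (h : ℕ → ℂ → ℂ)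
    (hH : ∀ u : ℝ, 0 < u → AnalyticOn ℂ (H u) (ball z₀ ρ₂))
    (hh : ∀ s : ℕ, AnalyticOn ℂ (h s) (ball z₀ ρ₂ \ {z₀}))
    (hexp : ∀ n : ℕ, ∃ C u₀ : ℝ, ∀ u : ℝ, u₀ ≤ u → ∀ z : ℂ,
      ρ₁ < ‖z - z₀‖ → ‖z - z₀‖ < ρ₂ →
      ‖H u z - ∑ s ∈ Finset.range n, h s z / (u : ℂ) ^ s‖ ≤ C / u ^ n) :
    ∀ (s r : ℕ) (ρ' : ℝ), ρ₁ < ρ' → ρ' < ρ₂ →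
      (∮ z in C(z₀, ρ'), (z - z₀) ^ r * h s z) = 0 := by
  intro s r ρ' hρ₁' hρ₂'
  have hρ' : 0 < ρ' := hρ₁.trans hρ₁'
  have hsphere : sphere z₀ ρ' ⊆ ball z₀ ρ₂ \ {z₀} := fun z hz =>
    ⟨sphere_subset_ball hρ₂' hz, ne_of_mem_sphere hz hρ'.ne'⟩
  have hannulus : IsUniformAsymptoticExpansionOn H h {z | ρ₁ < ‖z - z₀‖ ∧ ‖z - z₀‖ < ρ₂} :=
    fun n => let ⟨C, u₀, hC⟩ := hexp n; ⟨C, u₀, fun u hu z hz => hC u hu z hz.1 hz.2⟩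
  have hsphere_annulus : sphere z₀ ρ' ⊆ {z | ρ₁ < ‖z - z₀‖ ∧ ‖z - z₀‖ < ρ₂} := fun z hz => by
    show ρ₁ < ‖z - z₀‖ ∧ ‖z - z₀‖ < ρ₂
    rw [mem_sphere_iff_norm.1 hz]
    exact ⟨hρ₁', hρ₂'⟩
  have hweighted := (hannulus.mono hsphere_annulus).mul_left (g := fun z => (z - z₀) ^ r)
    (M := ρ' ^ r) fun z hz => by rw [norm_pow, mem_sphere_iff_norm.1 hz]
  have hdiff (u : ℝ) (hu : 0 < u) :
      DifferentiableOn ℂ (fun z => (z - z₀) ^ r * H u z) (ball z₀ ρ₂) :=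
    ((differentiable_id.sub_const z₀).pow r).differentiableOn.mul (hH u hu).differentiableOn
  have hmoments := hweighted.circleIntegral hρ'.le
    ((eventually_gt_atTop 0).mono fun u hu =>
      ((hdiff u hu).continuousOn.mono (sphere_subset_ball hρ₂')).circleIntegrable hρ'.le)
    fun t => (((continuous_id.sub continuous_const).pow r).continuousOn.mul
      ((hh t).continuousOn.mono hsphere)).circleIntegrable hρ'.le
  have hzero := (hmoments.congr ((eventually_gt_atTop 0).mono fun u hu =>
    circleIntegral_eq_zero_of_differentiableOn_ball hρ'.le hρ₂' (hdiff u hu))).eq_zero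
  exact congrFun hzero s

/-- Under the annulus-asymptotics hypotheses, every moment contour integral
`∮ (z - z₀)^r h_s(z) dz` over a circle inside the annulus vanishes; equivalently
all negative Laurent coefficients of each `h_s` at `z₀` vanish. -/
theorem stmt12 (ρ₁ ρ₂ : ℝ) (hρ₁ : 0 < ρ₁) (hρ : ρ₁ < ρ₂) (z₀ : ℂ)
    (H : ℝ → ℂ → ℂ) (h : ℕ → ℂ → ℂ)
    (hH : ∀ u : ℝ, 0 < u → AnalyticOn ℂ (H u) (ball z₀ ρ₂))
    (hh : ∀ s : ℕ, AnalyticOn ℂ (h s) (ball z₀ ρ₂ \ {z₀}))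
    (hexp : ∀ n : ℕ, ∃ C u₀ : ℝ, ∀ u : ℝ, u₀ ≤ u → ∀ z : ℂ,
      ρ₁ < ‖z - z₀‖ → ‖z - z₀‖ < ρ₂ →
      ‖H u z - ∑ s ∈ Finset.range n, h s z / (u : ℂ) ^ s‖ ≤ C / u ^ n) :
    ∀ (s r : ℕ) (ρ' : ℝ), ρ₁ < ρ' → ρ' < ρ₂ →
      (∮ z in C(z₀, ρ'), (z - z₀) ^ r * h s z) = 0 :=
  stmt12_general ρ₁ ρ₂ hρ₁ z₀ H h hH hh hexp
end

section
/- Define L_U(a,λ) = ∫₀^∞ e^{-λt} U(a,t) dt. Then L_U satisfies ∂²L_U/∂λ² = 4(λ² - a)L_U - 4U'(a,0) - 4λU(a,0), and L_U(a,·) extends to an entire function of λ. -/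
open Filter Asymptotics MeasureTheory Set Topology

/-!
Both `U` and `U''` = `(t²/4 + a) U` decay faster than every exponential, and so does `U'`:
being the integral of `U''`, it has a limit at infinity, which must vanish because `U → 0`,
so `U'` is minus the tail integral of `U''`. Consequently the Laplace integral and all its
moments converge for every `λ ∈ ℂ`, differentiation under the integral sign shows that
`L_U` is entire with `L_U'' = L[t² U]`, and two integrations by parts turn
`L[t² U] = 4 L[U''] - 4a L[U]` into the stated equation.
-/

def SuperexponentialDecay {E : Type*} [Norm E] (g : ℝ → E) : Prop :=
  ∀ b : ℝ, g =O[atTop] fun t => Real.exp (-b * t)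

lemma isBigO_exp_neg_mul_of_le {b c : ℝ} (h : b ≤ c) :
    (fun t : ℝ => Real.exp (-c * t)) =O[atTop] fun t => Real.exp (-b * t) := by
  refine Real.isBigO_exp_comp_exp_comp.2 (isBoundedUnder_of_eventually_le (a := 0) ?_)
  filter_upwards [eventually_ge_atTop 0] with t ht
  simp only [Pi.sub_apply]
  nlinarith

lemma superexponentialDecay_rpow_mul_exp_neg_mul_sq (s : ℝ) {c : ℝ} (hc : 0 < c) :
    SuperexponentialDecay fun t : ℝ => t ^ s * Real.exp (-c * t ^ 2) := by
  intro b
  have hexp : (fun t : ℝ => Real.exp (t + -c * t ^ 2)) =O[atTop] fun t => Real.exp (-b * t) := by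
    refine Real.isBigO_exp_comp_exp_comp.2 (isBoundedUnder_of_eventually_le (a := 0) ?_)
    filter_upwards [eventually_ge_atTop 0, eventually_ge_atTop ((1 + b) / c)] with t ht ht'
    have : 1 + b ≤ c * t := by rwa [div_le_iff₀' hc] at ht'
    simp only [Pi.sub_apply]
    nlinarith
  refine IsBigO.trans ?_ hexp
  simp only [Real.exp_add]
  exact ((isLittleO_rpow_exp_pos_mul_atTop s one_pos).isBigO.mul (isBigO_refl _ _)).congr_right
    fun t => by rw [one_mul]

lemma isBigO_sq_div_add_exp (c q : ℝ) :
    (fun t : ℝ => t ^ 2 / c + q) =O[atTop] fun t => Real.exp (1 * t) := by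
  simpa only [one_mul, div_eq_inv_mul, pow_zero, mul_one] using
    ((Real.isLittleO_pow_exp_atTop (n := 2)).const_mul_left c⁻¹).add
      ((Real.isLittleO_pow_exp_atTop (n := 0)).const_mul_left q) |>.isBigO

lemma eq_zero_of_tendsto_of_tendsto_deriv {f f' : ℝ → ℝ} {c L : ℝ}
    (hf : ∀ x, HasDerivAt f (f' x) x) (hfc : Tendsto f atTop (𝓝 c))
    (hf'L : Tendsto f' atTop (𝓝 L)) : L = 0 := by
  have hmvt : ∀ x : ℝ, ∃ ξ ∈ Ioo x (x + 1), f' ξ = (f (x + 1) - f x) / (x + 1 - x) :=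
    fun x => exists_hasDerivAt_eq_slope f f' (lt_add_one x)
      (fun y _ => (hf y).continuousAt.continuousWithinAt) fun y _ => hf y
  choose ξ hξ hξeq using hmvt
  have hξtop : Tendsto ξ atTop atTop := tendsto_atTop_mono (fun x => (hξ x).1.le) tendsto_id
  have hdiff : Tendsto (fun x => f' (ξ x)) atTop (𝓝 (c - c)) := by
    simp only [hξeq, add_sub_cancel_left, div_one]
    exact (hfc.comp (tendsto_atTop_add_const_right _ 1 tendsto_id)).sub hfc
  rw [← sub_self c]
  exact tendsto_nhds_unique (hf'L.comp hξtop) hdiff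

namespace SuperexponentialDecay

section NormedGroup

variable {E : Type*} [NormedAddCommGroup E] {g : ℝ → E}

lemma neg (hd : SuperexponentialDecay g) : SuperexponentialDecay fun t => -g t :=
  fun b => (hd b).neg_left

lemma tendsto_zero (hd : SuperexponentialDecay g) : Tendsto g atTop (𝓝 0) :=
  (hd 1).trans_tendsto <| by
    simpa only [neg_mul, one_mul] using Real.tendsto_exp_neg_atTop_nhds_zero

lemma integrableOn_Ioi (hd : SuperexponentialDecay g) (hc : Continuous g) (a : ℝ) :
    IntegrableOn g (Ioi a) :=
  (integrableOn_Ici_iff_integrableOn_Ioi).mp <|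
    (hc.continuousOn.locallyIntegrableOn measurableSet_Ici).integrableOn_of_isBigO_atTop (hd 1)
      ⟨Ioi 1, Ioi_mem_atTop 1, exp_neg_integrableOn_Ioi 1 one_pos⟩

lemma integral_Ioi [NormedSpace ℝ E] (hd : SuperexponentialDecay g) :
    SuperexponentialDecay fun x => ∫ s in Ioi x, g s := by
  intro b
  set c := max b 1
  have hc : 0 < c := lt_of_lt_of_le one_pos (le_max_right b 1)
  obtain ⟨C, hC⟩ := (hd c).bound
  obtain ⟨N, hN⟩ := eventually_atTop.1 hC
  refine IsBigO.trans ?_ (isBigO_exp_neg_mul_of_le (le_max_left b 1))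
  refine IsBigO.of_bound (C / c) ?_
  filter_upwards [eventually_ge_atTop N] with x hx
  calc ‖∫ s in Ioi x, g s‖ ≤ ∫ s in Ioi x, C * Real.exp (-c * s) := by
        refine norm_integral_le_of_norm_le ((exp_neg_integrableOn_Ioi x hc).const_mul C) ?_
        filter_upwards [ae_restrict_mem measurableSet_Ioi] with s hs
        simpa only [Real.norm_eq_abs, Real.abs_exp] using hN s (hx.trans hs.out.le)
    _ = C / c * ‖Real.exp (-c * x)‖ := by
        rw [integral_const_mul, integral_exp_mul_Ioi (by linarith), Real.norm_eq_abs,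
          Real.abs_exp]
        field_simp

end NormedGroup

lemma mul_left {R : Type*} [NormedRing R] {g h : ℝ → R} (hd : SuperexponentialDecay g) (k : ℝ)
    (hh : h =O[atTop] fun t => Real.exp (k * t)) : SuperexponentialDecay fun t => h t * g t :=
  fun b => (hh.mul (hd (b + k))).congr_right fun t => by rw [← Real.exp_add]; ring_nf

lemma ofReal {g : ℝ → ℝ} (hd : SuperexponentialDecay g) :
    SuperexponentialDecay fun t => (g t : ℂ) :=
  fun b => Complex.isBigO_ofReal_left.2 (hd b)

lemma ofReal_mul {g : ℝ → ℂ} (hd : SuperexponentialDecay g) :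
    SuperexponentialDecay fun t => (t : ℂ) * g t :=
  hd.mul_left 1 <| Complex.isBigO_ofReal_left.2 <| by
    simpa only [pow_one, one_mul] using (Real.isLittleO_pow_exp_atTop (n := 1)).isBigO

lemma cexp_mul {g : ℝ → ℂ} (hd : SuperexponentialDecay g) (l : ℂ) :
    SuperexponentialDecay fun t => Complex.exp (-l * t) * g t :=
  hd.mul_left (-l.re) <| isBigO_of_le _ fun t => by
    simp [Complex.norm_exp, Complex.mul_re]

lemma deriv {f f' f'' : ℝ → ℝ} (hf : ∀ x, HasDerivAt f (f' x) x)
    (hf' : ∀ x, HasDerivAt f' (f'' x) x) (hc : Continuous f'')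
    (hd : SuperexponentialDecay f) (hd'' : SuperexponentialDecay f'') :
    SuperexponentialDecay f' := by
  have hlim := tendsto_limUnder_of_hasDerivAt_of_integrableOn_Ioi (fun x _ => hf' x)
    (hd''.integrableOn_Ioi hc 0)
  rw [eq_zero_of_tendsto_of_tendsto_deriv hf hd.tendsto_zero hlim] at hlim
  have htail : f' = fun x => -∫ s in Ioi x, f'' s := funext fun x => by
    rw [integral_Ioi_of_hasDerivAt_of_tendsto' (fun y _ => hf' y) (hd''.integrableOn_Ioi hc x)
      hlim, zero_sub, neg_neg]
  exact htail ▸ hd''.integral_Ioi.neg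

end SuperexponentialDecay

noncomputable def laplaceTransform (g : ℝ → ℂ) (l : ℂ) : ℂ :=
  ∫ t in Ioi (0 : ℝ), Complex.exp (-l * t) * g t

section LaplaceTransform

variable {g : ℝ → ℂ}

lemma integrableOn_cexp_mul (hc : Continuous g) (hd : SuperexponentialDecay g) (l : ℂ) :
    IntegrableOn (fun t : ℝ => Complex.exp (-l * t) * g t) (Ioi 0) :=
  (hd.cexp_mul l).integrableOn_Ioi (by fun_prop) 0

lemma hasDerivAt_laplaceTransform (hc : Continuous g) (hd : SuperexponentialDecay g) (l₀ : ℂ) :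
    HasDerivAt (laplaceTransform g) (-laplaceTransform (fun t => t * g t) l₀) l₀ := by
  set R : ℝ := ‖l₀‖ + 1
  have hbound : ∀ x ∈ Metric.ball l₀ 1, ∀ t : ℝ, 0 < t →
      ‖-(Complex.exp (-x * t) * (t * g t))‖ ≤
        ‖Complex.exp (-(-R : ℂ) * t) * (t * g t)‖ := by
    intro x hx t ht
    have hxR : -x.re ≤ R := by
      have h1 := norm_le_norm_add_norm_sub' x l₀
      have h2 : ‖x - l₀‖ < 1 := by rwa [← dist_eq_norm]
      linarith [neg_le_abs x.re, Complex.abs_re_le_norm x]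
    rw [norm_neg, norm_mul, norm_mul (Complex.exp _)]
    gcongr
    simp only [Complex.norm_exp, neg_mul, Complex.neg_re, Complex.mul_re, Complex.ofReal_re,
      Complex.ofReal_im, mul_zero, sub_zero, neg_neg]
    gcongr
    nlinarith
  have key := hasDerivAt_integral_of_dominated_loc_of_deriv_le
    (μ := volume.restrict (Ioi (0 : ℝ)))
    (F := fun (l : ℂ) (t : ℝ) => Complex.exp (-l * t) * g t)
    (F' := fun (l : ℂ) (t : ℝ) => -(Complex.exp (-l * t) * (t * g t)))
    (Metric.ball_mem_nhds l₀ one_pos)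
    (Eventually.of_forall fun l => (integrableOn_cexp_mul hc hd l).aestronglyMeasurable)
    (integrableOn_cexp_mul hc hd l₀)
    (integrableOn_cexp_mul (by fun_prop) hd.ofReal_mul l₀).neg.aestronglyMeasurable
    ((ae_restrict_mem measurableSet_Ioi).mono fun t ht x hx => hbound x hx t ht)
    (integrableOn_cexp_mul (by fun_prop) hd.ofReal_mul (-R)).norm
    (Eventually.of_forall fun t x _ => by
      refine ((((hasDerivAt_id x).neg.mul_const (t : ℂ)).cexp).mul_const (g t)).congr_deriv ?_
      simp only [Pi.neg_apply, id_eq]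
      ring)
  rw [integral_neg] at key
  exact key.2

lemma differentiable_laplaceTransform (hc : Continuous g) (hd : SuperexponentialDecay g) :
    Differentiable ℂ (laplaceTransform g) :=
  fun l => (hasDerivAt_laplaceTransform hc hd l).differentiableAt

lemma deriv_deriv_laplaceTransform (hc : Continuous g) (hd : SuperexponentialDecay g) (l : ℂ) :
    deriv (deriv (laplaceTransform g)) l = laplaceTransform (fun t => t * (t * g t)) l := by
  have hderiv : deriv (laplaceTransform g) = -laplaceTransform (fun t => t * g t) :=
    funext fun l => (hasDerivAt_laplaceTransform hc hd l).deriv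
  rw [hderiv]
  simpa only [neg_neg] using (hasDerivAt_laplaceTransform (by fun_prop) hd.ofReal_mul l).neg.deriv

lemma laplaceTransform_const_mul_add {f : ℝ → ℂ} (hcf : Continuous f)
    (hdf : SuperexponentialDecay f) (hc : Continuous g) (hd : SuperexponentialDecay g)
    (p q l : ℂ) : laplaceTransform (fun t => p * f t + q * g t) l =
      p * laplaceTransform f l + q * laplaceTransform g l := by
  unfold laplaceTransform
  rw [← integral_const_mul, ← integral_const_mul, ← integral_add
    ((integrableOn_cexp_mul hcf hdf l).const_mul _) ((integrableOn_cexp_mul hc hd l).const_mul _)]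
  congr 1 with t
  ring

lemma laplaceTransform_deriv {g' : ℝ → ℂ} (hg : ∀ t, HasDerivAt g (g' t) t)
    (hc' : Continuous g') (hd : SuperexponentialDecay g) (hd' : SuperexponentialDecay g')
    (l : ℂ) : laplaceTransform g' l = l * laplaceTransform g l - g 0 := by
  have hc : Continuous g := continuous_iff_continuousAt.2 fun t => (hg t).continuousAt
  have hint := (integrableOn_cexp_mul hc hd l).const_mul (-l)
  have hint' := integrableOn_cexp_mul hc' hd' l
  have hprod : ∀ t : ℝ, HasDerivAt (fun t : ℝ => Complex.exp (-l * t) * g t)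
      (-l * (Complex.exp (-l * t) * g t) + Complex.exp (-l * t) * g' t) t := fun t => by
    have hlin : HasDerivAt (fun t : ℝ => -l * (t : ℂ)) (-l) t := by
      simpa using (hasDerivAt_id t).ofReal_comp.const_mul (-l)
    refine (hlin.cexp.mul (hg t)).congr_deriv ?_
    ring
  have hibp := integral_Ioi_of_hasDerivAt_of_tendsto' (fun t _ => hprod t) (hint.add hint')
    (hd.cexp_mul l).tendsto_zero
  rw [integral_add hint hint', integral_const_mul] at hibp
  simp only [Complex.ofReal_zero, mul_zero, Complex.exp_zero, one_mul, zero_sub] at hibp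
  unfold laplaceTransform
  linear_combination hibp

end LaplaceTransform

/-- The Laplace transform `L_U(a,λ) = ∫₀^∞ e^{-λt} U(a,t) dt` satisfies
`L_U'' = 4(λ² - a)L_U - 4U'(a,0) - 4λ U(a,0)` and is an entire function of `λ`. -/
theorem stmt15 (a : ℝ) (U : ℝ → ℝ)
    (hU : ContDiff ℝ ⊤ U)
    (hUode : ∀ t, deriv (deriv U) t - (t ^ 2 / 4 + a) * U t = 0)
    (hUdecay : (fun t : ℝ => U t) =O[atTop] fun t : ℝ =>
      t ^ (-a - 1 / 2) * Real.exp (-t ^ 2 / 4)) :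
    ∃ F : ℂ → ℂ, Differentiable ℂ F ∧
      (∀ l : ℂ,
        F l = ∫ t in Set.Ioi (0 : ℝ), Complex.exp (-l * t) * (U t : ℂ)) ∧
      (∀ l : ℂ, deriv (deriv F) l =
        4 * (l ^ 2 - (a : ℂ)) * F l - 4 * ((deriv U 0 : ℝ) : ℂ) - 4 * l * ((U 0 : ℝ) : ℂ)) := by
  have hode : deriv (deriv U) = fun t => (t ^ 2 / 4 + a) * U t :=
    funext fun t => by linarith [hUode t]
  have hU1 : Differentiable ℝ U := hU.differentiable (by simp)
  have hU2 : Differentiable ℝ (deriv U) :=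
    (hU.of_le le_top : ContDiff ℝ 2 U).differentiable_deriv_two
  have hcU'' : Continuous (deriv (deriv U)) := hode ▸ by fun_prop
  have hdU : SuperexponentialDecay U := fun b => hUdecay.trans <| by
    simpa only [neg_mul, one_div_mul_eq_div, neg_div] using
      superexponentialDecay_rpow_mul_exp_neg_mul_sq (-a - 1 / 2) (c := 1 / 4) (by norm_num) b
  have hdU'' : SuperexponentialDecay (deriv (deriv U)) :=
    hode ▸ hdU.mul_left 1 (isBigO_sq_div_add_exp 4 a)
  have hdU' : SuperexponentialDecay (deriv U) :=
    hdU.deriv (fun t => (hU1 t).hasDerivAt) (fun t => (hU2 t).hasDerivAt) hcU'' hdU''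
  refine ⟨laplaceTransform fun t => (U t : ℂ),
    differentiable_laplaceTransform (by fun_prop) hdU.ofReal, fun l => rfl, fun l => ?_⟩
  have hibp₁ := laplaceTransform_deriv (fun t => (hU1 t).hasDerivAt.ofReal_comp)
    (Complex.continuous_ofReal.comp hU2.continuous) hdU.ofReal hdU'.ofReal l
  have hibp₂ := laplaceTransform_deriv (fun t => (hU2 t).hasDerivAt.ofReal_comp)
    (Complex.continuous_ofReal.comp hcU'') hdU'.ofReal hdU''.ofReal l
  have hmoment : laplaceTransform (fun t => ((deriv (deriv U) t : ℝ) : ℂ)) l =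
      4⁻¹ * laplaceTransform (fun t => t * (t * U t)) l +
        a * laplaceTransform (fun t => U t) l := by
    rw [← laplaceTransform_const_mul_add (by fun_prop) hdU.ofReal.ofReal_mul.ofReal_mul
      (by fun_prop) hdU.ofReal, hode]
    congr 1 with t
    push_cast
    ring
  rw [deriv_deriv_laplaceTransform (by fun_prop) hdU.ofReal]
  linear_combination 4 * hibp₂ - 4 * hmoment + 4 * l * hibp₁
end

section
/- For fixed a, the Laplace transform L_W^±(a,λ) = ∫₀^∞ e^{-λt}W(a,±t)dt has the asymptotic expansion L_W^±(a,λ) ~ (W(a,0)/λ)Σ_{s≥0} α_s(a)/λ^{2s} ± (W'(a,0)/λ²)Σ_{s≥0} β_s(a)/λ^{2s} as λ → ∞ in |arg λ| ≤ π/2 - δ, where α₀ = β₀ = 1, α₁ = β₁ = a, α_{s+2} = aα_{s+1} - (s+1)(2s+1)α_s/2, and β_{s+2} = aβ_{s+1} - (s+1)(2s+3)β_s/2. -/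
open Real Filter Asymptotics

namespace Stmt16Aux

open MeasureTheory Set


lemma intgb (k : ℕ) {b : ℝ} (hb : 0 < b) :
    IntegrableOn (fun t : ℝ => t ^ k * Real.exp (-(b * t))) (Set.Ioi 0) := by
  have h := integrableOn_rpow_mul_exp_neg_mul_rpow (p := 1) (s := (k : ℝ)) (b := b)
    (lt_of_lt_of_le neg_one_lt_zero (Nat.cast_nonneg k)) zero_lt_one hb
  refine IntegrableOn.congr_fun h (fun t ht => ?_) measurableSet_Ioi
  rw [Set.mem_Ioi] at ht
  rw [Real.rpow_natCast, Real.rpow_one, neg_mul]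

lemma intgb_val (k : ℕ) {b : ℝ} (hb : 0 < b) :
    ∫ t in Set.Ioi (0:ℝ), t ^ k * Real.exp (-(b * t)) = (k.factorial : ℝ) / b ^ (k + 1) := by
  have h := integral_rpow_mul_exp_neg_mul_Ioi (a := (k : ℝ) + 1) (r := b) (by positivity) hb
  rw [show ((k : ℝ) + 1 - 1) = (k : ℝ) by ring] at h
  have h2 : ∫ t in Set.Ioi (0:ℝ), t ^ k * Real.exp (-(b * t))
      = ∫ t in Set.Ioi (0:ℝ), t ^ ((k : ℝ)) * Real.exp (-(b * t)) := by
    refine setIntegral_congr_fun measurableSet_Ioi (fun t ht => ?_)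
    rw [Real.rpow_natCast]
  rw [h2, h, Real.Gamma_nat_eq_factorial,
    show ((k:ℝ) + 1) = ((k+1 : ℕ) : ℝ) by push_cast; ring,
    Real.rpow_natCast, div_pow, one_pow, one_div, ← div_eq_inv_mul]

lemma expnorm (l : ℂ) (t : ℝ) :
    ‖Complex.exp (-l * t)‖ = Real.exp (-(l.re * t)) := by
  rw [Complex.norm_exp]
  congr 1
  simp [Complex.mul_re]

lemma cintI (k : ℕ) {l : ℂ} (hl : 0 < l.re) :
    IntegrableOn (fun t : ℝ => Complex.exp (-l * t) * (t:ℂ)^k) (Set.Ioi 0) := by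
  refine Integrable.mono' (intgb k hl) ?_ ?_
  · exact (Continuous.mul (Complex.continuous_exp.comp (by continuity))
      (by continuity)).aestronglyMeasurable
  · filter_upwards [ae_restrict_mem measurableSet_Ioi] with t ht
    rw [Set.mem_Ioi] at ht
    rw [norm_mul, expnorm, norm_pow, Complex.norm_real, Real.norm_eq_abs, abs_of_pos ht]
    exact le_of_eq (mul_comm _ _)

lemma tendsto_aux (k : ℕ) {b : ℝ} (hb : 0 < b) :
    Tendsto (fun t : ℝ => t ^ k * Real.exp (-(b * t))) atTop (nhds 0) := by
  have h1 := tendsto_pow_mul_exp_neg_atTop_nhds_zero k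
  have h2 : Tendsto (fun x : ℝ => b * x) atTop atTop :=
    Tendsto.const_mul_atTop hb tendsto_id
  have h3 := (h1.comp h2).const_mul (1 / b ^ k)
  rw [mul_zero] at h3
  refine h3.congr (fun x => ?_)
  simp only [Function.comp]
  rw [mul_pow]
  field_simp

lemma cint_val (k : ℕ) {l : ℂ} (hl : 0 < l.re) :
    ∫ t in Set.Ioi (0:ℝ), Complex.exp (-l * t) * (t:ℂ)^k
      = (k.factorial : ℂ) / l ^ (k + 1) := by
  have hl0 : l ≠ 0 := fun h => by simp [h] at hl
  induction k with
  | zero =>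
    have hd : ∀ t ∈ Set.Ici (0:ℝ), HasDerivAt (fun t : ℝ => -l⁻¹ * Complex.exp (-l * t))
        (Complex.exp (-l * t) * (t:ℂ)^0) t := by
      intro t _
      have h1 : HasDerivAt (fun z : ℂ => Complex.exp (-l * z)) (-l * Complex.exp (-l * t)) t := by
        simpa [Function.comp_def, neg_mul, mul_comm] using (Complex.hasDerivAt_exp (-l * t)).comp (t:ℂ)
          ((hasDerivAt_id (t:ℂ)).const_mul (-l))
      have h2 := (h1.comp_ofReal).const_mul (-l⁻¹)
      refine h2.congr_deriv ?_
      simp [hl0]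
    have ht : Tendsto (fun t : ℝ => -l⁻¹ * Complex.exp (-l * t)) atTop (nhds 0) := by
      have h3 : Tendsto (fun t : ℝ => (t ^ 0 * Real.exp (-(l.re * t))) * ‖l‖⁻¹) atTop (nhds 0) := by
        simpa using (tendsto_aux 0 hl).mul_const ‖l‖⁻¹
      refine squeeze_zero_norm (fun t => ?_) h3
      rw [norm_mul, norm_neg, norm_inv, expnorm, pow_zero, one_mul, mul_comm]
    have := integral_Ioi_of_hasDerivAt_of_tendsto' (fun t h => hd t h) (cintI 0 hl) ht
    rw [this]
    simp
  | succ k ih =>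
    have hd : ∀ t ∈ Set.Ici (0:ℝ), HasDerivAt (fun t : ℝ => Complex.exp (-l * t) * (t:ℂ)^(k+1))
        (Complex.exp (-l * t) * ((k+1 : ℂ) * (t:ℂ)^k) + (-l * Complex.exp (-l * t)) * (t:ℂ)^(k+1)) t := by
      intro t _
      have h1 : HasDerivAt (fun t : ℝ => Complex.exp (-l * t)) (-l * Complex.exp (-l * t)) t := by
        have : HasDerivAt (fun z : ℂ => Complex.exp (-l * z)) (-l * Complex.exp (-l * t)) t := by
          simpa [Function.comp_def, neg_mul, mul_comm] using (Complex.hasDerivAt_exp (-l * t)).comp (t:ℂ)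
            ((hasDerivAt_id (t:ℂ)).const_mul (-l))
        exact this.comp_ofReal
      have h2 : HasDerivAt (fun t : ℝ => (t:ℂ)^(k+1)) ((k+1 : ℂ) * (t:ℂ)^k) t := by
        have := (hasDerivAt_pow (k+1) (t:ℂ)).comp_ofReal
        simpa using this
      have := h1.mul h2
      refine this.congr_deriv ?_
      ring
    have ht : Tendsto (fun t : ℝ => Complex.exp (-l * t) * (t:ℂ)^(k+1)) atTop (nhds 0) := by
      refine squeeze_zero_norm' ?_ (tendsto_aux (k+1) hl)
      filter_upwards [eventually_ge_atTop (0:ℝ)] with t ht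
      rw [norm_mul, expnorm, norm_pow, Complex.norm_real, Real.norm_eq_abs, abs_of_nonneg ht,
        mul_comm]
    have hint : IntegrableOn (fun t : ℝ => Complex.exp (-l * t) * ((k+1 : ℂ) * (t:ℂ)^k)
        + (-l * Complex.exp (-l * t)) * (t:ℂ)^(k+1)) (Set.Ioi 0) := by
      refine Integrable.add ?_ ?_
      · exact IntegrableOn.congr_fun ((cintI k hl).const_mul (k+1 : ℂ))
          (fun t ht => by ring) measurableSet_Ioi
      · exact IntegrableOn.congr_fun ((cintI (k+1) hl).const_mul (-l))
          (fun t ht => by ring) measurableSet_Ioi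
    have key := integral_Ioi_of_hasDerivAt_of_tendsto' (fun t h => hd t h) hint ht
    rw [integral_add (IntegrableOn.congr_fun ((cintI k hl).const_mul (k+1:ℂ))
        (fun t ht => by ring) measurableSet_Ioi)
      (IntegrableOn.congr_fun ((cintI (k+1) hl).const_mul (-l))
        (fun t ht => by ring) measurableSet_Ioi)] at key
    have e1 : ∫ t in Set.Ioi (0:ℝ), Complex.exp (-l * t) * ((k+1:ℂ) * (t:ℂ)^k)
        = (k+1:ℂ) * ∫ t in Set.Ioi (0:ℝ), Complex.exp (-l * t) * (t:ℂ)^k := by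
      rw [← integral_const_mul]
      exact setIntegral_congr_fun measurableSet_Ioi (fun t ht => by ring)
    have e2 : ∫ t in Set.Ioi (0:ℝ), (-l * Complex.exp (-l * t)) * (t:ℂ)^(k+1)
        = -l * ∫ t in Set.Ioi (0:ℝ), Complex.exp (-l * t) * (t:ℂ)^(k+1) := by
      rw [← integral_const_mul]
      exact setIntegral_congr_fun measurableSet_Ioi (fun t ht => by ring)
    rw [e1, e2, ih] at key
    have hz : Complex.exp (-l * (0:ℝ)) * ((0:ℝ):ℂ)^(k+1) = 0 := by simp
    rw [hz, sub_zero] at key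
    have h3 : l * ∫ t in Set.Ioi (0:ℝ), Complex.exp (-l * t) * (t:ℂ)^(k+1)
        = (k+1:ℂ) * ((k.factorial:ℂ) / l ^ (k+1)) := by
      linear_combination -key
    have h5 : (∫ t in Set.Ioi (0:ℝ), Complex.exp (-l * t) * (t:ℂ)^(k+1)) * l^(k+2)
        = (k+1:ℂ) * (k.factorial:ℂ) := by
      have e : (k.factorial:ℂ)/l^(k+1) * l^(k+1) = (k.factorial:ℂ) :=
        div_mul_cancel₀ _ (pow_ne_zero _ hl0)
      calc (∫ t in Set.Ioi (0:ℝ), Complex.exp (-l * t) * (t:ℂ)^(k+1)) * l^(k+2)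
          = (l * ∫ t in Set.Ioi (0:ℝ), Complex.exp (-l * t) * (t:ℂ)^(k+1)) * l^(k+1) := by ring
        _ = (k+1:ℂ) * ((k.factorial:ℂ)/l^(k+1)) * l^(k+1) := by rw [h3]
        _ = (k+1:ℂ) * (k.factorial:ℂ) := by rw [mul_assoc, e]
    rw [eq_div_iff (pow_ne_zero _ hl0), Nat.factorial_succ]
    push_cast
    linear_combination h5

variable {g : ℝ → ℝ} {a : ℝ}

lemma hdiffj (hg : ContDiff ℝ (⊤ : ℕ∞) g) (j : ℕ) : Differentiable ℝ (iteratedDeriv j g) :=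
  hg.differentiable_iteratedDeriv j (by exact_mod_cast lt_top_iff_ne_top.2 (by simp))

lemma hda (hg : ContDiff ℝ (⊤ : ℕ∞) g) (p : ℕ) (x : ℝ) :
    HasDerivAt (iteratedDeriv p g) (iteratedDeriv (p+1) g x) x := by
  rw [iteratedDeriv_succ]
  exact ((hdiffj hg p) x).hasDerivAt

lemma Q2 (hg : ContDiff ℝ (⊤ : ℕ∞) g) (hode : ∀ x, deriv (deriv g) x = (a - x^2/4) * g x) :
    iteratedDeriv 2 g = fun x => a * iteratedDeriv 0 g x - (x^2 * iteratedDeriv 0 g x)/4 := by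
  funext x
  have h1 : iteratedDeriv 2 g x = deriv (deriv g) x := by
    conv_lhs => rw [show (2:ℕ) = 1 + 1 from rfl, iteratedDeriv_succ, iteratedDeriv_one]
  rw [h1, hode x, iteratedDeriv_zero]
  ring

lemma Q3 (hg : ContDiff ℝ (⊤ : ℕ∞) g) (hode : ∀ x, deriv (deriv g) x = (a - x^2/4) * g x) :
    iteratedDeriv 3 g = fun x => a * iteratedDeriv 1 g x -
      (x^2 * iteratedDeriv 1 g x + 2*x*iteratedDeriv 0 g x)/4 := by
  funext x
  have h0 : iteratedDeriv 3 g x = deriv (iteratedDeriv 2 g) x := by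
    conv_lhs => rw [show (3:ℕ) = 2 + 1 from rfl, iteratedDeriv_succ]
  rw [h0, Q2 hg hode]
  have h1 := (hda hg 0 x).const_mul a
  have h2 := ((hasDerivAt_pow 2 x).mul (hda hg 0 x)).div_const 4
  have hc := h1.sub h2
  refine hc.deriv.trans ?_
  simp only [show (0:ℕ)+1 = 1 from rfl]
  push_cast
  ring

lemma Qmain (hg : ContDiff ℝ (⊤ : ℕ∞) g) (hode : ∀ x, deriv (deriv g) x = (a - x^2/4) * g x) :
    ∀ k : ℕ, iteratedDeriv (k+4) g = fun x =>
      a * iteratedDeriv (k+2) g x -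
        (x^2 * iteratedDeriv (k+2) g x + (2*(k:ℝ)+4)*x*iteratedDeriv (k+1) g x
          + ((k:ℝ)+2)*((k:ℝ)+1)*iteratedDeriv k g x)/4 := by
  intro k
  induction k with
  | zero =>
    funext x
    have h0 : iteratedDeriv (0+4) g x = deriv (iteratedDeriv 3 g) x := by
      conv_lhs => rw [show (0:ℕ)+4 = 3 + 1 from rfl, iteratedDeriv_succ]
    rw [h0, Q3 hg hode]
    have h1 := (hda hg 1 x).const_mul a
    have h2 := ((hasDerivAt_pow 2 x).mul (hda hg 1 x)).div_const 4
    have h3 := (((hasDerivAt_id x).const_mul (2:ℝ)).mul (hda hg 0 x)).div_const 4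
    have hfun : (fun y : ℝ => a * iteratedDeriv 1 g y -
        (y^2 * iteratedDeriv 1 g y + 2*y*iteratedDeriv 0 g y)/4)
        = fun y : ℝ => a * iteratedDeriv 1 g y - y^2 * iteratedDeriv 1 g y / 4
          - 2 * id y * iteratedDeriv 0 g y / 4 := by
      funext y; simp only [id_eq]; ring
    rw [hfun]; refine ((h1.sub h2).sub h3).deriv.trans ?_
    simp only [id_eq, show (0:ℕ)+1 = 1 from rfl, show (1:ℕ)+1 = 2 from rfl,
      show (0:ℕ)+2 = 2 from rfl, show (0:ℕ)+4 = 4 from rfl]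
    push_cast
    ring
  | succ k ih =>
    funext x
    have h0 : iteratedDeriv (k+1+4) g x = deriv (iteratedDeriv (k+4) g) x := by
      conv_lhs => rw [show k+1+4 = (k+4) + 1 from rfl, iteratedDeriv_succ]
    rw [h0, ih]
    have h1 := (hda hg (k+2) x).const_mul a
    have h2 := ((hasDerivAt_pow 2 x).mul (hda hg (k+2) x)).div_const 4
    have h3 := (((hasDerivAt_id x).const_mul (2*(k:ℝ)+4)).mul (hda hg (k+1) x)).div_const 4
    have h4 := ((hda hg k x).const_mul (((k:ℝ)+2)*((k:ℝ)+1))).div_const 4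
    have hfun : (fun y : ℝ => a * iteratedDeriv (k+2) g y -
        (y^2 * iteratedDeriv (k+2) g y + (2*(k:ℝ)+4)*y*iteratedDeriv (k+1) g y
          + ((k:ℝ)+2)*((k:ℝ)+1)*iteratedDeriv k g y)/4)
        = fun y : ℝ => a * iteratedDeriv (k+2) g y - y^2 * iteratedDeriv (k+2) g y / 4
          - ((2*(k:ℝ)+4) * id y * iteratedDeriv (k+1) g y / 4
            + ((k:ℝ)+2)*((k:ℝ)+1) * iteratedDeriv k g y / 4) := by
      funext y; simp only [id_eq]; ring
    rw [hfun]; refine ((h1.sub h2).sub (h3.add h4)).deriv.trans ?_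
    simp only [id_eq, show k+2+1 = k+3 from rfl, show k+1+1 = k+2 from rfl,
      show k+1+2 = k+3 from rfl]
    push_cast
    ring

lemma D_rec (hg : ContDiff ℝ (⊤ : ℕ∞) g) (hode : ∀ x, deriv (deriv g) x = (a - x^2/4) * g x) (k : ℕ) :
    iteratedDeriv (k+4) g 0 = a * iteratedDeriv (k+2) g 0
      - ((k:ℝ)+2)*((k:ℝ)+1)/4 * iteratedDeriv k g 0 := by
  have := congrFun (Qmain hg hode k) 0
  rw [this]
  ring

lemma even_coeff (hg : ContDiff ℝ (⊤ : ℕ∞) g) (hode : ∀ x, deriv (deriv g) x = (a - x^2/4) * g x)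
    (α : ℕ → ℝ) (hα0 : α 0 = 1) (hα1 : α 1 = a)
    (hαrec : ∀ s : ℕ, α (s + 2) =
      a * α (s + 1) - ((s : ℝ) + 1) * (2 * (s : ℝ) + 1) / 2 * α s) :
    ∀ s, iteratedDeriv (2*s) g 0 = g 0 * α s := by
  have key : ∀ s, iteratedDeriv (2*s) g 0 = g 0 * α s
      ∧ iteratedDeriv (2*(s+1)) g 0 = g 0 * α (s+1) := by
    intro s
    induction s with
    | zero =>
      constructor
      · simp [iteratedDeriv_zero, hα0]
      · have h2 := congrFun (Q2 hg hode) 0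
        simp only [iteratedDeriv_zero] at h2
        rw [show 2*(0+1) = 2 from rfl, h2, hα1]
        ring
    | succ s ih =>
      refine ⟨ih.2, ?_⟩
      have hr := D_rec hg hode (2*s)
      rw [show 2*(s+1+1) = 2*s+4 by ring, hr, show 2*s+2 = 2*(s+1) by ring,
        ih.1, ih.2, hαrec s]
      push_cast
      ring
  exact fun s => (key s).1

lemma odd_coeff (hg : ContDiff ℝ (⊤ : ℕ∞) g) (hode : ∀ x, deriv (deriv g) x = (a - x^2/4) * g x)
    (β : ℕ → ℝ) (hβ0 : β 0 = 1) (hβ1 : β 1 = a)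
    (hβrec : ∀ s : ℕ, β (s + 2) =
      a * β (s + 1) - ((s : ℝ) + 1) * (2 * (s : ℝ) + 3) / 2 * β s) :
    ∀ s, iteratedDeriv (2*s+1) g 0 = deriv g 0 * β s := by
  have key : ∀ s, iteratedDeriv (2*s+1) g 0 = deriv g 0 * β s
      ∧ iteratedDeriv (2*(s+1)+1) g 0 = deriv g 0 * β (s+1) := by
    intro s
    induction s with
    | zero =>
      constructor
      · simp [iteratedDeriv_one, hβ0]
      · have h3 := congrFun (Q3 hg hode) 0
        rw [show 2*(0+1)+1 = 3 from rfl, h3, hβ1, iteratedDeriv_one]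
        ring
    | succ s ih =>
      refine ⟨ih.2, ?_⟩
      have hr := D_rec hg hode (2*s+1)
      rw [show 2*(s+1+1)+1 = (2*s+1)+4 by ring, hr, show 2*s+1+2 = 2*(s+1)+1 by ring,
        ih.1, ih.2, hβrec s]
      push_cast
      ring
  exact fun s => (key s).1

lemma hdiffjALT (hg : ContDiff ℝ (⊤ : ℕ∞) g) (j : ℕ) : Differentiable ℝ (iteratedDeriv j g) :=
  hg.differentiable_iteratedDeriv j (by exact_mod_cast lt_top_iff_ne_top.2 (by simp))

lemma itdw (hg : ContDiff ℝ (⊤ : ℕ∞) g) (k : ℕ) :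
    ∀ x ∈ Icc (0:ℝ) 1, iteratedDerivWithin k g (Icc 0 1) x = iteratedDeriv k g x := by
  induction k with
  | zero => simp
  | succ k ih =>
    intro x hx
    rw [iteratedDerivWithin_succ,
      derivWithin_congr ih (ih x hx), iteratedDeriv_succ]
    exact DifferentiableAt.derivWithin ((hdiffjALT hg k) x) ((uniqueDiffOn_Icc one_pos) x hx)

lemma taylor_global (hg : ContDiff ℝ (⊤ : ℕ∞) g) (M : ℝ) (hM : ∀ t, |g t| ≤ M) (m : ℕ) :
    ∃ C : ℝ, 0 ≤ C ∧ ∀ t : ℝ, 0 ≤ t →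
      |g t - ∑ k ∈ Finset.range m, iteratedDeriv k g 0 / k.factorial * t^k| ≤ C * t^m := by
  have hM0 : 0 ≤ M := le_trans (abs_nonneg _) (hM 0)
  obtain ⟨C₁, hC₁⟩ := exists_taylor_mean_remainder_bound (f := g) (a := 0) (b := 1) (n := m)
    zero_le_one ((hg.of_le (mod_cast le_top)).contDiffOn)
  have hsum : ∀ t : ℝ, taylorWithinEval g m (Icc 0 1) 0 t
      = ∑ k ∈ Finset.range (m+1), iteratedDeriv k g 0 / k.factorial * t^k := by
    intro t
    rw [taylor_within_apply]
    refine Finset.sum_congr rfl fun k hk => ?_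
    rw [itdw hg k 0 (left_mem_Icc.2 zero_le_one), smul_eq_mul, sub_zero]
    ring
  set c : ℕ → ℝ := fun k => iteratedDeriv k g 0 / k.factorial with hc
  refine ⟨|C₁| + |c m| + M + ∑ k ∈ Finset.range m, |c k|, by positivity, ?_⟩
  intro t ht
  have htm : (0:ℝ) ≤ t^m := by positivity
  have hcs : (0:ℝ) ≤ ∑ k ∈ Finset.range m, |c k| :=
    Finset.sum_nonneg fun k _ => abs_nonneg _
  by_cases h1 : t ≤ 1
  · have hb := hC₁ t ⟨ht, h1⟩
    rw [hsum t, Finset.sum_range_succ, Real.norm_eq_abs, sub_zero] at hb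
    have e1 : g t - ∑ k ∈ Finset.range m, c k * t^k
        = (g t - (∑ k ∈ Finset.range m, c k * t^k + c m * t^m)) + c m * t^m := by ring
    have h2 : |g t - ∑ k ∈ Finset.range m, c k * t^k|
        ≤ C₁ * t^(m+1) + |c m| * t^m := by
      rw [e1]
      refine le_trans (abs_add_le _ _) (add_le_add hb ?_)
      rw [abs_mul, abs_pow, abs_of_nonneg ht]
    refine le_trans h2 ?_
    have h3 : C₁ * t^(m+1) ≤ |C₁| * t^m := by
      have : t^(m+1) ≤ t^m := pow_le_pow_of_le_one ht h1 (Nat.le_succ m)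
      have h4 : C₁ * t^(m+1) ≤ |C₁| * t^(m+1) := by
        have : (0:ℝ) ≤ t^(m+1) := by positivity
        nlinarith [le_abs_self C₁]
      exact le_trans h4 (mul_le_mul_of_nonneg_left this (abs_nonneg _))
    nlinarith
  · push_neg at h1
    have h1' : (1:ℝ) ≤ t := h1.le
    have h2 : |g t - ∑ k ∈ Finset.range m, c k * t^k|
        ≤ M + ∑ k ∈ Finset.range m, |c k| * t^m := by
      refine le_trans (abs_sub _ _) (add_le_add (hM t) ?_)
      refine le_trans (Finset.abs_sum_le_sum_abs _ _) ?_
      refine Finset.sum_le_sum fun k hk => ?_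
      rw [abs_mul, abs_pow, abs_of_nonneg ht]
      exact mul_le_mul_of_nonneg_left
        (pow_le_pow_right₀ h1' (Finset.mem_range.1 hk).le) (abs_nonneg _)
    refine le_trans h2 ?_
    rw [← Finset.sum_mul]
    have hMt : M ≤ M * t^m := by nlinarith [one_le_pow₀ h1' (n := m)]
    nlinarith [abs_nonneg C₁, abs_nonneg (c m)]

lemma sum_split (F : ℕ → ℂ) (n : ℕ) :
    ∑ k ∈ Finset.range (2*n), F k
      = ∑ s ∈ Finset.range n, F (2*s) + ∑ s ∈ Finset.range n, F (2*s+1) := by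
  induction n with
  | zero => simp
  | succ n ih =>
    rw [show 2*(n+1) = (2*n+1)+1 by ring, Finset.sum_range_succ, Finset.sum_range_succ,
      ih, Finset.sum_range_succ, Finset.sum_range_succ (fun s => F (2*s+1))]
    ring

lemma watson_core (g : ℝ → ℝ) (hgc : Continuous g) (M : ℝ) (hM : ∀ t, |g t| ≤ M)
    (m : ℕ) (c : ℕ → ℝ) (C : ℝ) (hC : 0 ≤ C)
    (hbd : ∀ t : ℝ, 0 ≤ t → |g t - ∑ k ∈ Finset.range m, c k * t^k| ≤ C * t^m)
    (l : ℂ) (hl : 0 < l.re) :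
    ‖(∫ t in Set.Ioi (0:ℝ), Complex.exp (-l * t) * (g t : ℂ))
      - ∑ k ∈ Finset.range m, (c k : ℂ) * (k.factorial : ℂ) / l^(k+1)‖
      ≤ C * (m.factorial : ℝ) / l.re^(m+1) := by
  -- integrability of the main integrand
  have hIg : IntegrableOn (fun t : ℝ => Complex.exp (-l * t) * (g t : ℂ)) (Set.Ioi 0) := by
    refine Integrable.mono' (((exp_neg_integrableOn_Ioi 0 hl)).const_mul M) ?_ ?_
    · exact (Complex.continuous_exp.comp (by continuity)|>.mul
        (Complex.continuous_ofReal.comp hgc)).aestronglyMeasurable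
    · filter_upwards with t
      rw [norm_mul, expnorm, Complex.norm_real, Real.norm_eq_abs, neg_mul, mul_comm]
      exact mul_le_mul_of_nonneg_right (hM t) (Real.exp_nonneg _)
  -- the polynomial part
  have hS : IntegrableOn (fun t : ℝ =>
      Complex.exp (-l * t) * (∑ k ∈ Finset.range m, (c k : ℂ) * (t:ℂ)^k)) (Set.Ioi 0) := by
    have : IntegrableOn (fun t : ℝ =>
        ∑ k ∈ Finset.range m, (c k : ℂ) * (Complex.exp (-l * t) * (t:ℂ)^k)) (Set.Ioi 0) :=
      integrable_finset_sum _ (fun k _ => (cintI k hl).const_mul _)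
    refine this.congr_fun (fun t ht => ?_) measurableSet_Ioi
    rw [Finset.mul_sum]
    exact Finset.sum_congr rfl fun k _ => by ring
  have hSval : (∫ t in Set.Ioi (0:ℝ),
      Complex.exp (-l * t) * (∑ k ∈ Finset.range m, (c k : ℂ) * (t:ℂ)^k))
      = ∑ k ∈ Finset.range m, (c k : ℂ) * (k.factorial : ℂ) / l^(k+1) := by
    have e1 : (∫ t in Set.Ioi (0:ℝ),
        Complex.exp (-l * t) * (∑ k ∈ Finset.range m, (c k : ℂ) * (t:ℂ)^k))
        = ∫ t in Set.Ioi (0:ℝ),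
          ∑ k ∈ Finset.range m, (c k : ℂ) * (Complex.exp (-l * t) * (t:ℂ)^k) := by
      refine setIntegral_congr_fun measurableSet_Ioi (fun t ht => ?_)
      rw [Finset.mul_sum]
      exact Finset.sum_congr rfl fun k _ => by ring
    rw [e1, integral_finset_sum _ (fun k _ => (cintI k hl).const_mul _)]
    refine Finset.sum_congr rfl fun k _ => ?_
    rw [integral_const_mul, cint_val k hl]
    ring
  rw [← hSval, ← integral_sub hIg hS]
  have hnorm : ∀ t ∈ Set.Ioi (0:ℝ),
      ‖Complex.exp (-l * t) * (g t : ℂ)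
        - Complex.exp (-l * t) * (∑ k ∈ Finset.range m, (c k : ℂ) * (t:ℂ)^k)‖
      ≤ C * (t^m * Real.exp (-(l.re * t))) := by
    intro t ht
    rw [Set.mem_Ioi] at ht
    have e2 : Complex.exp (-l * t) * (g t : ℂ)
        - Complex.exp (-l * t) * (∑ k ∈ Finset.range m, (c k : ℂ) * (t:ℂ)^k)
        = Complex.exp (-l * t) * ((g t - ∑ k ∈ Finset.range m, c k * t^k : ℝ) : ℂ) := by
      push_cast
      ring
    rw [e2, norm_mul, expnorm, Complex.norm_real, Real.norm_eq_abs]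
    calc Real.exp (-(l.re * t)) * |g t - ∑ k ∈ Finset.range m, c k * t^k|
        ≤ Real.exp (-(l.re * t)) * (C * t^m) :=
          mul_le_mul_of_nonneg_left (hbd t ht.le) (Real.exp_nonneg _)
      _ = C * (t^m * Real.exp (-(l.re * t))) := by ring
  calc ‖∫ t in Set.Ioi (0:ℝ), (Complex.exp (-l * t) * (g t : ℂ)
        - Complex.exp (-l * t) * (∑ k ∈ Finset.range m, (c k : ℂ) * (t:ℂ)^k))‖
      ≤ ∫ t in Set.Ioi (0:ℝ), ‖Complex.exp (-l * t) * (g t : ℂ)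
        - Complex.exp (-l * t) * (∑ k ∈ Finset.range m, (c k : ℂ) * (t:ℂ)^k)‖ :=
        norm_integral_le_integral_norm _
    _ ≤ ∫ t in Set.Ioi (0:ℝ), C * (t^m * Real.exp (-(l.re * t))) := by
        refine setIntegral_mono_on ((hIg.sub hS).norm) ((intgb m hl).const_mul C)
          measurableSet_Ioi hnorm
    _ = C * (m.factorial : ℝ) / l.re^(m+1) := by
        rw [integral_const_mul, intgb_val m hl]
        ring

end Stmt16Aux

/-- Watson's-lemma asymptotic expansion of `L_W^±(a,λ) = ∫₀^∞ e^{-λt} W(a,±t) dt`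
as `λ → ∞` in `|arg λ| ≤ π/2 - δ`, with coefficients `α_s, β_s` given by the
stated three-term recurrences. -/
theorem stmt16 (a : ℝ) (W : ℝ → ℝ)
    (hW : ContDiff ℝ (⊤ : ℕ∞) W)
    (hWode : ∀ x, deriv (deriv W) x + (x ^ 2 / 4 - a) * W x = 0)
    (hWbound : ∃ M : ℝ, ∀ t : ℝ, |W t| ≤ M)
    (α β : ℕ → ℝ)
    (hα0 : α 0 = 1) (hα1 : α 1 = a)
    (hαrec : ∀ s : ℕ, α (s + 2) =
      a * α (s + 1) - ((s : ℝ) + 1) * (2 * (s : ℝ) + 1) / 2 * α s)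
    (hβ0 : β 0 = 1) (hβ1 : β 1 = a)
    (hβrec : ∀ s : ℕ, β (s + 2) =
      a * β (s + 1) - ((s : ℝ) + 1) * (2 * (s : ℝ) + 3) / 2 * β s)
    (sg : ℝ) (hsg : sg = 1 ∨ sg = -1)
    (δ : ℝ) (hδ : 0 < δ) :
    ∀ n : ℕ, ∃ C r : ℝ, ∀ l : ℂ, r ≤ ‖l‖ → |l.arg| ≤ π / 2 - δ →
      ‖(∫ t in Set.Ioi (0 : ℝ), Complex.exp (-l * t) * (W (sg * t) : ℂ)) -
        (((W 0 : ℝ) : ℂ) * ∑ s ∈ Finset.range n, (α s : ℂ) / l ^ (2 * s + 1) +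
          (sg : ℂ) * ((deriv W 0 : ℝ) : ℂ) *
            ∑ s ∈ Finset.range n, (β s : ℂ) / l ^ (2 * s + 2))‖ ≤
        C / ‖l‖ ^ (2 * n + 1) := by
  classical
  open Stmt16Aux in
  intro n
  obtain ⟨M, hM⟩ := hWbound
  have hsg2 : sg * sg = 1 := by rcases hsg with h|h <;> rw [h] <;> norm_num
  have hf : ContDiff ℝ (⊤ : ℕ∞) (fun t : ℝ => W (sg * t)) :=
    hW.comp (contDiff_const.mul contDiff_id)
  have hWd : Differentiable ℝ W := hW.differentiable (by simp)
  have hW2d : Differentiable ℝ (deriv W) := by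
    have := hdiffj hW 1
    rwa [iteratedDeriv_one] at this
  have hWodes : ∀ y, deriv (deriv W) y = (a - y^2/4) * W y := fun y => by
    linear_combination hWode y
  have hfd : ∀ x : ℝ, HasDerivAt (fun t : ℝ => W (sg * t)) (sg * deriv W (sg * x)) x := by
    intro x
    have h := ((hWd (sg*x)).hasDerivAt).comp x ((hasDerivAt_id x).const_mul sg)
    simpa [Function.comp_def, mul_comm] using h
  have hderivf : deriv (fun t : ℝ => W (sg * t)) = fun x => sg * deriv W (sg * x) :=
    funext fun x => (hfd x).deriv
  have hfode : ∀ x, deriv (deriv (fun t : ℝ => W (sg * t))) x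
      = (a - x^2/4) * (fun t : ℝ => W (sg * t)) x := by
    intro x
    rw [hderivf]
    have h2 : HasDerivAt (fun y : ℝ => deriv W (sg * y)) (sg * deriv (deriv W) (sg * x)) x := by
      have h := ((hW2d (sg*x)).hasDerivAt).comp x ((hasDerivAt_id x).const_mul sg)
      simpa [Function.comp_def, mul_comm] using h
    rw [(h2.const_mul sg).deriv, hWodes (sg*x)]
    have : (sg*x)^2 = x^2 := by rw [mul_pow]; nlinarith [hsg2]
    rw [this]
    linear_combination ((a - x^2/4) * W (sg*x)) * hsg2
  have hf0 : (fun t : ℝ => W (sg * t)) 0 = W 0 := by simp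
  have hdf0 : deriv (fun t : ℝ => W (sg * t)) 0 = sg * deriv W 0 := by
    rw [hderivf]; simp
  have heven := even_coeff hf hfode α hα0 hα1 hαrec
  have hodd := odd_coeff hf hfode β hβ0 hβ1 hβrec
  obtain ⟨C₂, hC₂0, hC₂⟩ := taylor_global hf M (fun t => hM (sg*t)) (2*n)
  set δ' := min δ (π/2) with hδ'
  have hδ'1 : 0 < δ' := lt_min hδ (by positivity)
  have hδ'2 : δ' ≤ π/2 := min_le_right _ _
  have hsδ : 0 < Real.sin δ' :=
    Real.sin_pos_of_pos_of_lt_pi hδ'1 (lt_of_le_of_lt hδ'2 (by linarith [pi_pos]))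
  refine ⟨C₂ * ((2*n).factorial : ℝ) / (Real.sin δ')^(2*n+1), 1, fun l hl1 harg => ?_⟩
  have hlabs : (0:ℝ) < ‖l‖ := lt_of_lt_of_le one_pos hl1
  have hl0 : l ≠ 0 := by
    intro h; rw [h] at hlabs; simp at hlabs
  have hlre : Real.sin δ' * ‖l‖ ≤ l.re := by
    have h1 : |l.arg| ≤ π/2 - δ' := le_trans harg (by
      have := min_le_left δ (π/2); linarith)
    have h2 : Real.cos (π/2 - δ') ≤ Real.cos |l.arg| :=
      Real.cos_le_cos_of_nonneg_of_le_pi (abs_nonneg _) (by linarith [pi_pos]) h1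
    rw [Real.cos_pi_div_two_sub, Real.cos_abs] at h2
    have h3 := Complex.norm_mul_cos_arg l
    calc Real.sin δ' * ‖l‖ ≤ Real.cos l.arg * ‖l‖ :=
          mul_le_mul_of_nonneg_right h2 hlabs.le
      _ = l.re := by rw [mul_comm]; exact h3
  have hlre_pos : 0 < l.re := lt_of_lt_of_le (by positivity) hlre
  have key := watson_core (fun t : ℝ => W (sg * t)) hf.continuous M (fun t => hM (sg*t))
    (2*n) (fun k => iteratedDeriv k (fun t : ℝ => W (sg * t)) 0 / (k.factorial : ℝ))
    C₂ hC₂0 (fun t ht => hC₂ t ht) l hlre_pos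
  have hfacne : ∀ k : ℕ, ((k.factorial : ℝ) : ℂ) ≠ 0 := fun k => by
    exact_mod_cast Nat.cast_ne_zero.2 (Nat.factorial_ne_zero k)
  have hsum : (∑ k ∈ Finset.range (2*n),
      ((iteratedDeriv k (fun t : ℝ => W (sg * t)) 0 / (k.factorial : ℝ) : ℝ) : ℂ)
        * (k.factorial : ℂ) / l^(k+1))
      = (((W 0 : ℝ) : ℂ) * ∑ s ∈ Finset.range n, (α s : ℂ) / l ^ (2 * s + 1) +
          (sg : ℂ) * ((deriv W 0 : ℝ) : ℂ) *
            ∑ s ∈ Finset.range n, (β s : ℂ) / l ^ (2 * s + 2)) := by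
    have e0 : ∀ k : ℕ, ((iteratedDeriv k (fun t : ℝ => W (sg * t)) 0 / (k.factorial : ℝ) : ℝ) : ℂ)
        * (k.factorial : ℂ) / l^(k+1)
        = ((iteratedDeriv k (fun t : ℝ => W (sg * t)) 0 : ℝ) : ℂ) / l^(k+1) := by
      intro k
      have hk : ((k.factorial : ℕ) : ℂ) ≠ 0 := Nat.cast_ne_zero.2 (Nat.factorial_ne_zero k)
      push_cast
      rw [div_mul_cancel₀ _ hk]
    rw [Finset.sum_congr rfl (fun k _ => e0 k),
      sum_split (fun k => ((iteratedDeriv k (fun t : ℝ => W (sg * t)) 0 : ℝ) : ℂ) / l^(k+1)) n]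
    congr 1
    · rw [Finset.mul_sum]
      refine Finset.sum_congr rfl fun s _ => ?_
      rw [heven s, show W (sg*0) = W 0 by rw [mul_zero]]
      push_cast
      ring
    · rw [Finset.mul_sum]
      refine Finset.sum_congr rfl fun s _ => ?_
      rw [hodd s, hdf0]
      push_cast
      ring
  rw [← hsum]
  refine le_trans key ?_
  have hpow : (Real.sin δ' * ‖l‖)^(2*n+1) ≤ l.re^(2*n+1) :=
    pow_le_pow_left₀ (by positivity) hlre _
  rw [div_div, ← mul_pow]
  refine div_le_div_of_nonneg_left ?_ ?_ hpow
  · positivity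
  · positivity
end
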